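/- arXiv:2310.15544 — 7 statements merged into one kernel-verified Lean document; each statement's English description precedes it below -/
import Mathlib

section
/- Let n, m, q, r ∈ ℕ with r ≥ 1, let A ∈ ℝ^{n×n}, B ∈ ℝ^{n×m}, C ∈ ℝ^{m×n} satisfy C A^k B = 0 for all k = 0, …, r−2, and let Ã ∈ ℝ^{q×q}, B̃ ∈ ℝ^{q×m}, C̃ ∈ ℝ^{m×q} be arbitrary. Define the series interconnection A_ic = [[A, B C̃],[0, Ã]] ∈ ℝ^{(n+q)×(n+q)}, B_ic = [B; B̃] ∈ ℝ^{(n+q)×m}, C_ic = [C, 0] ∈ ℝ^{m×(n+q)}. Then C_ic A_ic^k B_ic = C A^k B for all k = 0, …, r−1; in particular C_ic A_ic^k B_ic = 0 for k = 0, …, r−2 and C_ic A_ic^{r−1} B_ic = C A^{r−1} B. -/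
open Matrix

section SeriesInterconnection

variable {R l n q m : Type*} [Semiring R] [Fintype n] [Fintype q] [Fintype m]
  [DecidableEq n] [DecidableEq q]
  {A : Matrix n n R} {B : Matrix n m R} {C : Matrix l n R}
  {Atil : Matrix q q R} {Ctil : Matrix m q R} {k : ℕ}

/-- The internal model is driven only through `C A^j B`, so while those vanish it stays invisible
to the output. -/
theorem fromCols_zero_mul_fromBlocks_pow (hCAB : ∀ j < k, C * A ^ j * B = 0) :
    fromCols C (0 : Matrix l q R) * fromBlocks A (B * Ctil) 0 Atil ^ k =
      fromCols (C * A ^ k) 0 := by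
  induction k with
  | zero => simp
  | succ k ih =>
    have hk : C * A ^ k * B = 0 := hCAB k k.lt_succ_self
    rw [pow_succ, ← Matrix.mul_assoc, ih fun j hj => hCAB j (hj.trans k.lt_succ_self),
      fromCols_mul_fromBlocks, ← Matrix.mul_assoc, hk]
    simp [pow_succ, Matrix.mul_assoc]

theorem fromCols_zero_mul_fromBlocks_pow_mul_fromRows (Btil : Matrix q m R)
    (hCAB : ∀ j < k, C * A ^ j * B = 0) :
    fromCols C (0 : Matrix l q R) * fromBlocks A (B * Ctil) 0 Atil ^ k * fromRows B Btil =
      C * A ^ k * B := by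
  rw [fromCols_zero_mul_fromBlocks_pow hCAB, fromCols_mul_fromRows]
  simp

end SeriesInterconnection

theorem stmt_0_general (n m q r : ℕ)
    (A : Matrix (Fin n) (Fin n) ℝ) (B : Matrix (Fin n) (Fin m) ℝ) (C : Matrix (Fin m) (Fin n) ℝ)
    (Atil : Matrix (Fin q) (Fin q) ℝ) (Btil : Matrix (Fin q) (Fin m) ℝ)
    (Ctil : Matrix (Fin m) (Fin q) ℝ)
    (hMarkov : ∀ k, k < r - 1 → C * A ^ k * B = 0)
    (Aic : Matrix (Fin n ⊕ Fin q) (Fin n ⊕ Fin q) ℝ)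
    (Bic : Matrix (Fin n ⊕ Fin q) (Fin m) ℝ)
    (Cic : Matrix (Fin m) (Fin n ⊕ Fin q) ℝ)
    (hAic : Aic = Matrix.fromBlocks A (B * Ctil) 0 Atil)
    (hBic : Bic = Matrix.fromRows B Btil)
    (hCic : Cic = Matrix.fromCols C 0) :
    (∀ k, k < r → Cic * Aic ^ k * Bic = C * A ^ k * B) ∧
    (∀ k, k < r - 1 → Cic * Aic ^ k * Bic = 0) ∧
    Cic * Aic ^ (r - 1) * Bic = C * A ^ (r - 1) * B := by
  have markov_eq : ∀ k ≤ r - 1, Cic * Aic ^ k * Bic = C * A ^ k * B := fun k hk => by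
    subst hAic hBic hCic
    exact fromCols_zero_mul_fromBlocks_pow_mul_fromRows Btil fun j hj => hMarkov j (by omega)
  exact ⟨fun k hk => markov_eq k (by omega),
    fun k hk => (markov_eq k hk.le).trans (hMarkov k hk), markov_eq (r - 1) le_rfl⟩

/-- **Markov parameters of the series interconnection.**
If `(A,B,C)` has vanishing Markov parameters `C A^k B = 0` for `k = 0,…,r−2`, then the series
interconnection with an arbitrary internal model `(Ã,B̃,C̃)` has the same Markov parameters as
the original system up to order `r−1`. -/
theorem stmt_0 (n m q r : ℕ) (hr : 1 ≤ r)
    (A : Matrix (Fin n) (Fin n) ℝ) (B : Matrix (Fin n) (Fin m) ℝ) (C : Matrix (Fin m) (Fin n) ℝ)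
    (Atil : Matrix (Fin q) (Fin q) ℝ) (Btil : Matrix (Fin q) (Fin m) ℝ)
    (Ctil : Matrix (Fin m) (Fin q) ℝ)
    (hMarkov : ∀ k, k < r - 1 → C * A ^ k * B = 0)
    (Aic : Matrix (Fin n ⊕ Fin q) (Fin n ⊕ Fin q) ℝ)
    (Bic : Matrix (Fin n ⊕ Fin q) (Fin m) ℝ)
    (Cic : Matrix (Fin m) (Fin n ⊕ Fin q) ℝ)
    (hAic : Aic = Matrix.fromBlocks A (B * Ctil) 0 Atil)
    (hBic : Bic = Matrix.fromRows B Btil)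
    (hCic : Cic = Matrix.fromCols C 0) :
    (∀ k, k < r → Cic * Aic ^ k * Bic = C * A ^ k * B) ∧
    (∀ k, k < r - 1 → Cic * Aic ^ k * Bic = 0) ∧
    Cic * Aic ^ (r - 1) * Bic = C * A ^ (r - 1) * B :=
  stmt_0_general n m q r A B C Atil Btil Ctil hMarkov Aic Bic Cic hAic hBic hCic
end

section
/- Let A ∈ ℝ^{n×n}, B ∈ ℝ^{n×m}, C ∈ ℝ^{m×n}, Ã ∈ ℝ^{q×q}, B̃ ∈ ℝ^{q×m}, C̃ ∈ ℝ^{m×q}, and define A_ic = [[A, B C̃],[0, Ã]], B_ic = [B; B̃], C_ic = [C, 0]. Then for every λ ∈ ℂ that is neither an eigenvalue of A nor of Ã, det [[A_ic − λI, B_ic],[C_ic, 0]] = det [[A − λI, B],[C, 0]] · det(Ã − λI) · det( I_m + C̃ (λI − Ã)^{−1} B̃ ). -/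
/-!
Right-multiplying the Rosenbrock matrix of the interconnection by a unipotent block matrix
subtracts the internal-model columns times `S⁻¹B̃` (with `S = Ã − λI`) from the input columns.
This clears `B̃` and turns `B` into `B (I − C̃ S⁻¹ B̃)`, so the internal-model block row becomes
`[0, S, 0]`: `det S` splits off, and `det (I − C̃ S⁻¹ B̃)` factors out of the input columns of
the remaining Rosenbrock matrix of `(A, B, C)`.
-/

open Matrix

namespace Matrix

variable {R : Type*} [CommRing R] {n q m : Type*}
  [Fintype n] [Fintype q] [Fintype m] [DecidableEq n] [DecidableEq q] [DecidableEq m]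

theorem det_fromBlocks_zero₂₂_mul_right (P : Matrix n n R) (B : Matrix n m R) (C : Matrix m n R)
    (D : Matrix m m R) :
    (fromBlocks P (B * D) C 0).det = (fromBlocks P B C 0).det * D.det := by
  have : fromBlocks P (B * D) C 0 = fromBlocks P B C 0 * fromBlocks 1 0 0 D := by
    simp [fromBlocks_multiply]
  rw [this, det_mul, det_fromBlocks_zero₂₁, det_one, one_mul]

theorem det_fromBlocks_add_mul_right_cols (A : Matrix n n R) (B : Matrix n m R) (C : Matrix m n R)
    (D : Matrix m m R) (X : Matrix n m R) :
    (fromBlocks A (B + A * X) C (D + C * X)).det = (fromBlocks A B C D).det := by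
  have : fromBlocks A (B + A * X) C (D + C * X) = fromBlocks A B C D * fromBlocks 1 X 0 1 := by
    simp [fromBlocks_multiply, add_comm]
  rw [this, det_mul, det_fromBlocks_zero₂₁, det_one, det_one, mul_one, mul_one]

theorem det_fromBlocks_fromBlocks_zero₂₁_fromRows_zero (P : Matrix n n R) (Y : Matrix n q R)
    (S : Matrix q q R) (Z : Matrix n m R) (C : Matrix m n R) :
    (fromBlocks (fromBlocks P Y 0 S) (fromRows Z 0) (fromCols C 0) 0).det
      = S.det * (fromBlocks P Z C 0).det := by
  let e : q ⊕ (n ⊕ m) ≃ (n ⊕ q) ⊕ m :=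
    (Equiv.sumAssoc q n m).symm.trans (Equiv.sumCongr (Equiv.sumComm q n) (Equiv.refl m))
  rw [← det_reindex_self e.symm]
  have : reindex e.symm e.symm
      (fromBlocks (fromBlocks P Y 0 S) (fromRows Z 0) (fromCols C 0) 0)
      = fromBlocks S 0 (fromRows Y 0) (fromBlocks P Z C 0) := by
    ext (i | i | i) (j | j | j) <;> rfl
  rw [this, det_fromBlocks_zero₁₂]

theorem det_rosenbrock_seriesInterconnection (P : Matrix n n R) (B : Matrix n m R)
    (C : Matrix m n R) (S : Matrix q q R) (Bt : Matrix q m R) (Ct : Matrix m q R)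
    (hS : IsUnit S.det) :
    (fromBlocks (fromBlocks P (B * Ct) 0 S) (fromRows B Bt) (fromCols C 0) 0).det
      = (fromBlocks P B C 0).det * S.det * (1 - Ct * S⁻¹ * Bt).det := by
  rw [← det_fromBlocks_add_mul_right_cols _ _ _ _ (fromRows 0 (-(S⁻¹ * Bt))),
    fromBlocks_mul_fromRows, fromCols_mul_fromRows]
  simp only [Matrix.mul_zero, Matrix.zero_mul, zero_add, Matrix.mul_neg, neg_zero,
    mul_nonsing_inv_cancel_left _ _ hS]
  have hcol : fromRows B Bt + fromRows (-(B * Ct * (S⁻¹ * Bt))) (-Bt)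
      = fromRows (B * (1 - Ct * S⁻¹ * Bt)) 0 := by
    ext (i | i) j <;> simp [Matrix.mul_add, Matrix.mul_assoc, sub_eq_add_neg]
  rw [hcol, det_fromBlocks_fromBlocks_zero₂₁_fromRows_zero, det_fromBlocks_zero₂₂_mul_right]
  ring

end Matrix

theorem stmt_3_general (n m q : ℕ)
    (A : Matrix (Fin n) (Fin n) ℝ) (B : Matrix (Fin n) (Fin m) ℝ) (C : Matrix (Fin m) (Fin n) ℝ)
    (Atil : Matrix (Fin q) (Fin q) ℝ) (Btil : Matrix (Fin q) (Fin m) ℝ)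
    (Ctil : Matrix (Fin m) (Fin q) ℝ)
    (Aic : Matrix (Fin n ⊕ Fin q) (Fin n ⊕ Fin q) ℝ)
    (Bic : Matrix (Fin n ⊕ Fin q) (Fin m) ℝ)
    (Cic : Matrix (Fin m) (Fin n ⊕ Fin q) ℝ)
    (hAic : Aic = Matrix.fromBlocks A (B * Ctil) 0 Atil)
    (hBic : Bic = Matrix.fromRows B Btil)
    (hCic : Cic = Matrix.fromCols C 0)
    (lam : ℂ)
    (hAtil : (lam • (1 : Matrix (Fin q) (Fin q) ℂ) - Atil.map Complex.ofReal).det ≠ 0) :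
    (Matrix.fromBlocks
        (Aic.map Complex.ofReal - lam • (1 : Matrix (Fin n ⊕ Fin q) (Fin n ⊕ Fin q) ℂ))
        (Bic.map Complex.ofReal) (Cic.map Complex.ofReal) 0).det
      = (Matrix.fromBlocks
            (A.map Complex.ofReal - lam • (1 : Matrix (Fin n) (Fin n) ℂ))
            (B.map Complex.ofReal) (C.map Complex.ofReal) 0).det
        * (Atil.map Complex.ofReal - lam • (1 : Matrix (Fin q) (Fin q) ℂ)).det
        * ((1 : Matrix (Fin m) (Fin m) ℂ)
            + Ctil.map Complex.ofReal
              * (lam • (1 : Matrix (Fin q) (Fin q) ℂ) - Atil.map Complex.ofReal)⁻¹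
              * Btil.map Complex.ofReal).det := by
  subst hAic hBic hCic
  set S := Atil.map Complex.ofReal - lam • (1 : Matrix (Fin q) (Fin q) ℂ)
  have hneg : lam • (1 : Matrix (Fin q) (Fin q) ℂ) - Atil.map Complex.ofReal = -S :=
    (neg_sub _ _).symm
  have hS : IsUnit S.det :=
    isUnit_iff_ne_zero.mpr fun h => hAtil (by rw [hneg, det_neg, h, mul_zero])
  have hinv : (-S)⁻¹ = -S⁻¹ := inv_eq_left_inv (by rw [neg_mul_neg, nonsing_inv_mul _ hS])
  have hblock : (fromBlocks A (B * Ctil) 0 Atil).map Complex.ofReal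
      - lam • (1 : Matrix (Fin n ⊕ Fin q) (Fin n ⊕ Fin q) ℂ)
      = fromBlocks (A.map Complex.ofReal - lam • 1)
          (B.map Complex.ofReal * Ctil.map Complex.ofReal) 0 S := by
    have hmul : (B * Ctil).map Complex.ofReal = B.map Complex.ofReal * Ctil.map Complex.ofReal :=
      Matrix.map_mul (f := Complex.ofRealHom)
    rw [fromBlocks_map, ← fromBlocks_one, fromBlocks_smul]
    simp [hmul, sub_eq_add_neg, fromBlocks_neg, fromBlocks_add, S]
  rw [hblock, fromRows_map, fromCols_map, hneg, hinv, Matrix.mul_neg, Matrix.neg_mul,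
    ← sub_eq_add_neg, Matrix.map_zero _ Complex.ofReal_zero]
  exact det_rosenbrock_seriesInterconnection _ _ _ S _ _ hS

/-- **Rosenbrock determinant of the series interconnection.**
For every `λ ∈ ℂ` that is neither an eigenvalue of `A` nor of `Ã`,
`det [[A_ic − λI, B_ic],[C_ic, 0]]
   = det [[A − λI, B],[C, 0]] · det(Ã − λI) · det( I + C̃ (λI − Ã)⁻¹ B̃ )`. -/
theorem stmt_3 (n m q : ℕ)
    (A : Matrix (Fin n) (Fin n) ℝ) (B : Matrix (Fin n) (Fin m) ℝ) (C : Matrix (Fin m) (Fin n) ℝ)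
    (Atil : Matrix (Fin q) (Fin q) ℝ) (Btil : Matrix (Fin q) (Fin m) ℝ)
    (Ctil : Matrix (Fin m) (Fin q) ℝ)
    (Aic : Matrix (Fin n ⊕ Fin q) (Fin n ⊕ Fin q) ℝ)
    (Bic : Matrix (Fin n ⊕ Fin q) (Fin m) ℝ)
    (Cic : Matrix (Fin m) (Fin n ⊕ Fin q) ℝ)
    (hAic : Aic = Matrix.fromBlocks A (B * Ctil) 0 Atil)
    (hBic : Bic = Matrix.fromRows B Btil)
    (hCic : Cic = Matrix.fromCols C 0)
    (lam : ℂ)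
    (hA : (lam • (1 : Matrix (Fin n) (Fin n) ℂ) - A.map Complex.ofReal).det ≠ 0)
    (hAtil : (lam • (1 : Matrix (Fin q) (Fin q) ℂ) - Atil.map Complex.ofReal).det ≠ 0) :
    (Matrix.fromBlocks
        (Aic.map Complex.ofReal - lam • (1 : Matrix (Fin n ⊕ Fin q) (Fin n ⊕ Fin q) ℂ))
        (Bic.map Complex.ofReal) (Cic.map Complex.ofReal) 0).det
      = (Matrix.fromBlocks
            (A.map Complex.ofReal - lam • (1 : Matrix (Fin n) (Fin n) ℂ))
            (B.map Complex.ofReal) (C.map Complex.ofReal) 0).det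
        * (Atil.map Complex.ofReal - lam • (1 : Matrix (Fin q) (Fin q) ℂ)).det
        * ((1 : Matrix (Fin m) (Fin m) ℂ)
            + Ctil.map Complex.ofReal
              * (lam • (1 : Matrix (Fin q) (Fin q) ℂ) - Atil.map Complex.ofReal)⁻¹
              * Btil.map Complex.ofReal).det :=
  stmt_3_general n m q A B C Atil Btil Ctil Aic Bic Cic hAic hBic hCic lam hAtil
end

section
/- Let m, r, n ∈ ℕ and let (A,B,C) with A ∈ ℝ^{n×n}, B ∈ ℝ^{n×m}, C ∈ ℝ^{m×n} have strict relative degree r, be minimum phase, and have positive definite Γ := C A^{r−1} B (i.e., (A,B,C) ∈ Σ_{m,r}). Let α ∈ ℝ[s] be a monic polynomial of degree p such that for every root λ ∈ ℂ of α the matrix [[A − λI, B],[C, 0]] has rank n+m. Let β ∈ ℝ[s] be a monic Hurwitz polynomial of degree p coprime to α, and let Â ∈ ℝ^{p×p}, b̂ ∈ ℝ^p, ĉ ∈ ℝ^{1×p} be a minimal realization of β/α, i.e., (Â, b̂) is controllable, (ĉ, Â) is observable, and ĉ (λI − Â)^{−1} b̂ + 1 = β(λ)/α(λ) for all λ ∈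 ℂ outside the spectrum of Â. Set Ã = diag(Â,…,Â) ∈ ℝ^{mp×mp} (m diagonal blocks), B̃ = diag(b̂,…,b̂) ∈ ℝ^{mp×m}, C̃ = diag(ĉ,…,ĉ) ∈ ℝ^{m×mp}, and define the interconnection A_ic = [[A, B C̃],[0, Ã]], B_ic = [B; B̃], C_ic = [C, 0]. Then (A_ic, B_ic, C_ic) has strict relative degree r, is minimum phase, Γ_ic := C_ic A_ic^{r−1} B_ic equals Γ (hence is positive definite); i.e., (A_ic, B_ic, C_ic) ∈ Σ_{m,r}. -/
open Matrix Polynomial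

noncomputable section

/-- The Rosenbrock matrix `[[A − λI, B],[C, 0]]` of a square linear system, over `ℂ`. -/
def Rosenbrock {N : Type*} [Fintype N] [DecidableEq N] {m : ℕ}
    (A : Matrix N N ℝ) (B : Matrix N (Fin m) ℝ) (C : Matrix (Fin m) N ℝ) (lam : ℂ) :
    Matrix (N ⊕ Fin m) (N ⊕ Fin m) ℂ :=
  Matrix.fromBlocks (A.map Complex.ofReal - lam • 1) (B.map Complex.ofReal)
    (C.map Complex.ofReal) 0

/-- A system `(A,B,C)` is minimum phase if the Rosenbrock matrix has full rank for every `λ`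
with nonnegative real part. -/
def MinimumPhase {N : Type*} [Fintype N] [DecidableEq N] {m : ℕ}
    (A : Matrix N N ℝ) (B : Matrix N (Fin m) ℝ) (C : Matrix (Fin m) N ℝ) : Prop :=
  ∀ lam : ℂ, 0 ≤ lam.re → (Rosenbrock A B C lam).rank = Fintype.card N + m

/-- A system `(A,B,C)` has strict relative degree `r`: the Markov parameters `C A^k B` vanish for
`k = 0,…,r−2` and `C A^{r−1} B` is invertible. -/
def StrictRelDeg {N : Type*} [Fintype N] [DecidableEq N] {m : ℕ}
    (A : Matrix N N ℝ) (B : Matrix N (Fin m) ℝ) (C : Matrix (Fin m) N ℝ) (r : ℕ) : Prop :=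
  (∀ k, k < r - 1 → C * A ^ k * B = 0) ∧ IsUnit (C * A ^ (r - 1) * B)

/-- Positive definiteness of a (not necessarily symmetric) square matrix:
`xᵀ Γ x > 0` for all `x ≠ 0`. -/
def PosDefQuad {m : ℕ} (G : Matrix (Fin m) (Fin m) ℝ) : Prop :=
  ∀ v : Fin m → ℝ, v ≠ 0 → 0 < v ⬝ᵥ G.mulVec v

/-- The class `Σ_{m,r}`: strict relative degree `r`, minimum phase, and positive definite
high-frequency gain `Γ = C A^{r-1} B`. -/
def SigmaClass {N : Type*} [Fintype N] [DecidableEq N] {m : ℕ}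
    (A : Matrix N N ℝ) (B : Matrix N (Fin m) ℝ) (C : Matrix (Fin m) N ℝ) (r : ℕ) : Prop :=
  StrictRelDeg A B C r ∧ MinimumPhase A B C ∧ PosDefQuad (C * A ^ (r - 1) * B)

/-- A real polynomial is Hurwitz if all its complex roots have negative real part. -/
def HurwitzPoly (q : Polynomial ℝ) : Prop :=
  ∀ z : ℂ, Polynomial.aeval z q = 0 → z.re < 0

/-- The pair `(Â, b̂)` is controllable: the controllability matrix has full rank. -/
def Controllable {p : ℕ} (Ah : Matrix (Fin p) (Fin p) ℝ) (bh : Fin p → ℝ) : Prop :=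
  (Matrix.of fun i j : Fin p => ((Ah ^ (j : ℕ)) *ᵥ bh) i).rank = p

/-- The pair `(ĉ, Â)` is observable: `(Âᵀ, ĉᵀ)` is controllable. -/
def Observable {p : ℕ} (ch : Fin p → ℝ) (Ah : Matrix (Fin p) (Fin p) ℝ) : Prop :=
  Controllable Ah.transpose ch

/-- The block-diagonal internal-model matrices built from a SISO realization `(Â, b̂, ĉ, 1)`. -/
def IMA {p : ℕ} (m : ℕ) (Ah : Matrix (Fin p) (Fin p) ℝ) :
    Matrix (Fin p × Fin m) (Fin p × Fin m) ℝ :=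
  Matrix.of fun i j => if i.2 = j.2 then Ah i.1 j.1 else 0

def IMB {p : ℕ} (m : ℕ) (bh : Fin p → ℝ) : Matrix (Fin p × Fin m) (Fin m) ℝ :=
  Matrix.of fun i l => if i.2 = l then bh i.1 else 0

def IMC {p : ℕ} (m : ℕ) (ch : Fin p → ℝ) : Matrix (Fin m) (Fin p × Fin m) ℝ :=
  Matrix.of fun l j => if l = j.2 then ch j.1 else 0

/-!
The Markov parameters of the cascade are those of `(A, B, C)`: as long as `C A^j B = 0` for
`j < k`, one has `C_ic A_ic^k = [C A^k, 0]`, so the relative degree and the high-frequency gain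
are inherited.

For the zeros, put `k = (λ - Â)⁻¹ b̂`. A column operation with `k` in every internal-model block
makes the Rosenbrock matrix of the cascade block triangular, whence
`det R_ic(λ) = det R(λ) · g(λ)^m · det(Â - λ)^m` with `g = ĉ (λ - Â)⁻¹ b̂ + 1 = β / α`.
Clearing denominators in `g = β / α` gives `α ∣ β χ_Â`, so coprimality and degrees force
`χ_Â = α`, and then `det R_ic(λ) = (-1)^{pm} β(λ)^m det R(λ)`. Both sides are polynomials in `λ`,
so this holds at every `λ`, including the roots of `α`; for `Re λ ≥ 0` the right side is nonzero
because `β` is Hurwitz and `(A, B, C)` is minimum phase.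
-/

theorem Polynomial.eq_of_eval_eq_off_roots {R : Type*} [CommRing R] [IsDomain R] [Infinite R]
    {f g q : R[X]} (hq : q ≠ 0) (h : ∀ x, q.eval x ≠ 0 → f.eval x = g.eval x) : f = g :=
  eq_of_infinite_eval_eq f g <| (finite_setOfPred_isRoot hq).infinite_compl.mono fun x hx => h x hx

theorem Matrix.det_ne_zero_of_rank_eq_card {K ι : Type*} [Field K] [Fintype ι] [DecidableEq ι]
    {M : Matrix ι ι K} (h : M.rank = Fintype.card ι) : M.det ≠ 0 := by
  have hrange : LinearMap.range M.mulVecLin = ⊤ :=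
    Submodule.eq_top_of_finrank_eq (by rw [Module.finrank_fintype_fun_eq_card]; exact h)
  exact ((isUnit_iff_isUnit_det M).mp
    (mulVec_surjective_iff_isUnit.mp (LinearMap.range_eq_top.mp hrange))).ne_zero

section Markov

variable {R : Type*} [Semiring R] {N Q κ : Type*} [Fintype N] [DecidableEq N] [Fintype Q]
  [DecidableEq Q] [Fintype κ]
  (A : Matrix N N R) (B : Matrix N κ R) (C : Matrix κ N R) (F : Matrix κ Q R) (G : Matrix Q Q R)

theorem fromCols_mul_fromBlocks_pow {k : ℕ} (h : ∀ j < k, C * A ^ j * B = 0) :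
    fromCols C (0 : Matrix κ Q R) * fromBlocks A (B * F) 0 G ^ k = fromCols (C * A ^ k) 0 := by
  induction k with
  | zero => simp
  | succ k ih =>
    rw [pow_succ, ← Matrix.mul_assoc, ih fun j hj => h j (hj.trans k.lt_succ_self),
      fromCols_mul_fromBlocks, ← Matrix.mul_assoc _ B, h k k.lt_succ_self]
    simp [pow_succ, Matrix.mul_assoc]

theorem fromCols_mul_fromBlocks_pow_mul_fromRows {k : ℕ} (H : Matrix Q κ R)
    (h : ∀ j < k, C * A ^ j * B = 0) :
    fromCols C (0 : Matrix κ Q R) * fromBlocks A (B * F) 0 G ^ k * fromRows B H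
      = C * A ^ k * B := by
  rw [fromCols_mul_fromBlocks_pow A B C F G h, fromCols_mul_fromRows, Matrix.zero_mul, add_zero]

end Markov

theorem strictRelDeg_cascade {N Q : Type*} [Fintype N] [DecidableEq N] [Fintype Q]
    [DecidableEq Q] {m r : ℕ} {A : Matrix N N ℝ} {B : Matrix N (Fin m) ℝ}
    {C : Matrix (Fin m) N ℝ} (h : StrictRelDeg A B C r) (F : Matrix (Fin m) Q ℝ)
    (G : Matrix Q Q ℝ) (H : Matrix Q (Fin m) ℝ) :
    StrictRelDeg (fromBlocks A (B * F) 0 G) (fromRows B H) (fromCols C 0) r := by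
  obtain ⟨hzero, hunit⟩ := h
  refine ⟨fun k hk => ?_, ?_⟩
  · rw [fromCols_mul_fromBlocks_pow_mul_fromRows A B C F G H fun j hj => hzero j (hj.trans hk)]
    exact hzero k hk
  · rwa [fromCols_mul_fromBlocks_pow_mul_fromRows A B C F G H hzero]

def blockVec {R ι : Type*} [Zero R] (κ : Type*) [DecidableEq κ] (v : ι → R) :
    Matrix (ι × κ) κ R :=
  of fun i l => if i.2 = l then v i.1 else 0

def blockCovec {R ι : Type*} [Zero R] (κ : Type*) [DecidableEq κ] (c : ι → R) :
    Matrix κ (ι × κ) R :=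
  of fun l j => if l = j.2 then c j.1 else 0

section BlockVectors

variable {R : Type*} {ι κ : Type*} [DecidableEq κ]

theorem blockCovec_mul_blockVec [CommSemiring R] [Fintype ι] [Fintype κ] (c v : ι → R) :
    blockCovec κ c * blockVec κ v = (c ⬝ᵥ v) • (1 : Matrix κ κ R) := by
  ext l l'
  simp only [mul_apply, blockCovec, blockVec, of_apply, Fintype.sum_prod_type, Matrix.smul_apply,
    one_apply, smul_eq_mul, dotProduct, ite_mul, zero_mul, mul_ite, mul_zero]
  rw [Finset.sum_comm]
  by_cases h : l = l' <;> simp [h]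

theorem blockDiagonal_mul_blockVec [CommSemiring R] [Fintype ι] [Fintype κ] [DecidableEq ι]
    (M : Matrix ι ι R) (v : ι → R) :
    blockDiagonal (fun _ : κ => M) * blockVec κ v = blockVec κ (M *ᵥ v) := by
  ext ⟨i, k⟩ l
  simp only [mul_apply, blockDiagonal_apply, blockVec, of_apply, Fintype.sum_prod_type, mulVec,
    dotProduct, ite_mul, zero_mul, mul_ite, mul_zero]
  by_cases h : k = l <;> simp [h]

theorem blockVec_map [Zero R] {S : Type*} [Zero S] (v : ι → R) (f : R → S) (hf : f 0 = 0) :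
    (blockVec κ v).map f = blockVec κ fun i => f (v i) := by
  ext i l
  by_cases h : i.2 = l <;> simp [blockVec, h, hf]

theorem blockCovec_map [Zero R] {S : Type*} [Zero S] (c : ι → R) (f : R → S) (hf : f 0 = 0) :
    (blockCovec κ c).map f = blockCovec κ fun i => f (c i) := by
  ext l j
  by_cases h : l = j.2 <;> simp [blockCovec, h, hf]

end BlockVectors

section Determinant

variable {R : Type*} [CommRing R] {N Q κ : Type*} [Fintype N] [DecidableEq N] [Fintype Q]
  [DecidableEq Q] [Fintype κ] [DecidableEq κ]

theorem det_fromBlocks_fromBlocks_zero (M : Matrix N N R) (E : Matrix N Q R) (D : Matrix Q Q R)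
    (B : Matrix N κ R) (C : Matrix κ N R) :
    (fromBlocks (fromBlocks M E 0 D) (fromRows B 0) (fromCols C 0) 0).det
      = (fromBlocks M B C 0).det * D.det := by
  let e : (N ⊕ κ) ⊕ Q ≃ (N ⊕ Q) ⊕ κ := (Equiv.sumAssoc N κ Q).trans
    (((Equiv.refl N).sumCongr (Equiv.sumComm κ Q)).trans (Equiv.sumAssoc N Q κ).symm)
  have hreindex : (fromBlocks (fromBlocks M E 0 D) (fromRows B 0) (fromCols C 0) 0).submatrix e e
      = fromBlocks (fromBlocks M B C 0) (fromRows E 0) 0 D := by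
    ext ((i | i) | i) ((j | j) | j) <;> simp [e]
  rw [← det_submatrix_equiv_self e, hreindex, det_fromBlocks_zero₂₁]

theorem det_fromBlocks_smul_zero (M : Matrix N N R) (B : Matrix N κ R) (C : Matrix κ N R)
    (s : R) :
    (fromBlocks M (s • B) C 0).det = (fromBlocks M B C 0).det * s ^ Fintype.card κ := by
  have hfactor : fromBlocks M (s • B) C 0 = fromBlocks M B C 0 * fromBlocks 1 0 0 (s • 1) := by
    simp [fromBlocks_multiply]
  rw [hfactor, det_mul, det_fromBlocks_zero₂₁, det_one, one_mul, det_smul, det_one, mul_one]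

theorem det_fromBlocks_cascade {ι : Type*} [Fintype ι] [DecidableEq ι] (M : Matrix N N R)
    (B : Matrix N κ R) (C : Matrix κ N R) (D : Matrix ι ι R) (b c k : ι → R)
    (hk : D *ᵥ k = -b) :
    (fromBlocks (fromBlocks M (B * blockCovec κ c) 0 (blockDiagonal fun _ : κ => D))
        (fromRows B (blockVec κ b)) (fromCols C 0) 0).det
      = (fromBlocks M B C 0).det * (1 + c ⬝ᵥ k) ^ Fintype.card κ
          * D.det ^ Fintype.card κ := by
  set T := fromBlocks (fromBlocks M (B * blockCovec κ c) 0 (blockDiagonal fun _ : κ => D))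
    (fromRows B (blockVec κ b)) (fromCols C 0) 0
  set V : Matrix ((N ⊕ ι × κ) ⊕ κ) ((N ⊕ ι × κ) ⊕ κ) R :=
    fromBlocks 1 (fromRows 0 (blockVec κ k)) 0 1
  have hV : V.det = 1 := by simp [V]
  -- `V` adds to each input column the internal-model columns of its block, weighted by `k`;
  -- since `D k = -b`, this clears the internal-model rows of the input columns.
  have hTV : T * V = fromBlocks (fromBlocks M (B * blockCovec κ c) 0 (blockDiagonal fun _ => D))
      (fromRows ((1 + c ⬝ᵥ k) • B) 0) (fromCols C 0) 0 := by
    have hB : B * blockCovec κ c * blockVec κ k = (c ⬝ᵥ k) • B := by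
      rw [Matrix.mul_assoc, blockCovec_mul_blockVec, Matrix.mul_smul, Matrix.mul_one]
    have hD : (blockDiagonal fun _ : κ => D) * blockVec κ k = -blockVec κ b := by
      rw [blockDiagonal_mul_blockVec, hk]
      ext i l
      by_cases h : i.2 = l <;> simp [blockVec, h]
    ext (i | i) (j | j) : 1
    all_goals
      simp [T, V, fromBlocks_multiply, fromBlocks_mul_fromRows, fromCols_mul_fromRows, hB, hD]
    rcases i with i | i <;> simp [add_mul, add_comm]
  have hTdet : T.det = (T * V).det := by rw [det_mul, hV, mul_one]
  rw [hTdet, hTV, det_fromBlocks_fromBlocks_zero, det_fromBlocks_smul_zero, det_blockDiagonal,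
    Finset.prod_const, Finset.card_univ]

end Determinant

section TransferFunction

variable {K : Type*} [Field K] {ι : Type*} [Fintype ι] [DecidableEq ι]

theorem map_charmatrix_evalRingHom (M : Matrix ι ι K) (t : K) :
    (charmatrix M).map (evalRingHom t) = t • 1 - M := by
  ext i j
  by_cases h : i = j <;> simp [one_apply, h]

theorem eval_charpoly_eq_det (M : Matrix ι ι K) (t : K) :
    M.charpoly.eval t = (t • 1 - M).det := by
  rw [eval_charpoly, smul_one_eq_diagonal, scalar_apply]

def transferNumerator (M : Matrix ι ι K) (b c : ι → K) : K[X] :=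
  (C ∘ c) ⬝ᵥ ((charmatrix M).adjugate *ᵥ (C ∘ b)) + M.charpoly

theorem eval_transferNumerator (M : Matrix ι ι K) (b c : ι → K) {t : K}
    (ht : (t • 1 - M).det ≠ 0) :
    (transferNumerator M b c).eval t
      = (c ⬝ᵥ (t • 1 - M)⁻¹ *ᵥ b + 1) * (t • 1 - M).det := by
  have hadj : (charmatrix M).adjugate.map (evalRingHom t) = (t • 1 - M).adjugate := by
    rw [← RingHom.mapMatrix_apply, RingHom.map_adjugate, RingHom.mapMatrix_apply,
      map_charmatrix_evalRingHom]
  have hnum : ((C ∘ c) ⬝ᵥ ((charmatrix M).adjugate *ᵥ (C ∘ b))).eval t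
      = c ⬝ᵥ (t • 1 - M).adjugate *ᵥ b := by
    rw [← coe_evalRingHom, RingHom.map_dotProduct]
    congr 1
    · ext; simp
    · ext i
      rw [Function.comp_apply, RingHom.map_mulVec, hadj]
      congr 1
      ext; simp
  rw [transferNumerator, eval_add, hnum, eval_charpoly_eq_det, inv_def, Ring.inverse_eq_inv,
    smul_mulVec, dotProduct_smul, smul_eq_mul]
  field_simp

theorem charpoly_eq_of_transfer [Infinite K] {M : Matrix ι ι K} {b c : ι → K} {α β : K[X]}
    (hα : α.Monic) (hdeg : α.natDegree = Fintype.card ι) (hcop : IsCoprime α β)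
    (htransfer : ∀ t : K, (t • 1 - M).det ≠ 0 →
      c ⬝ᵥ (t • 1 - M)⁻¹ *ᵥ b + 1 = β.eval t / α.eval t) :
    M.charpoly = α := by
  have hcross : transferNumerator M b c * α = β * M.charpoly := by
    refine eq_of_eval_eq_off_roots (mul_ne_zero hα.ne_zero M.charpoly_monic.ne_zero)
      fun t ht => ?_
    rw [eval_mul] at ht
    have hαt : α.eval t ≠ 0 := left_ne_zero_of_mul ht
    have hdet : (t • 1 - M).det ≠ 0 := eval_charpoly_eq_det M t ▸ right_ne_zero_of_mul ht
    rw [eval_mul, eval_mul, eval_transferNumerator M b c hdet, htransfer t hdet,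
      eval_charpoly_eq_det]
    field_simp
  have hdvd : α ∣ M.charpoly := hcop.dvd_of_dvd_mul_left (Dvd.intro_left _ hcross)
  exact eq_of_monic_of_dvd_of_natDegree_le hα M.charpoly_monic hdvd (by simp [hdeg])

end TransferFunction

section Complexification

open Complex

theorem exists_eval_eq_det_rosenbrock {N : Type*} [Fintype N] [DecidableEq N] {m : ℕ}
    (A : Matrix N N ℝ) (B : Matrix N (Fin m) ℝ) (C : Matrix (Fin m) N ℝ) :
    ∃ P : ℂ[X], ∀ lam : ℂ, P.eval lam = (Rosenbrock A B C lam).det := by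
  refine ⟨(fromBlocks ((A.map fun a => Polynomial.C (a : ℂ)) - (X : ℂ[X]) • 1)
    (B.map fun a => Polynomial.C (a : ℂ)) (C.map fun a => Polynomial.C (a : ℂ)) 0).det,
    fun lam => ?_⟩
  rw [← coe_evalRingHom, RingHom.map_det]
  congr 1
  ext (i | i) (j | j)
  · by_cases h : i = j <;> simp [Rosenbrock, one_apply, h]
  all_goals simp [Rosenbrock]

variable {N : Type*} [Fintype N] [DecidableEq N] {m p : ℕ} (A : Matrix N N ℝ)
  (B : Matrix N (Fin m) ℝ) (C : Matrix (Fin m) N ℝ) (Ah : Matrix (Fin p) (Fin p) ℝ)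
  (bh ch : Fin p → ℝ)

theorem IMA_eq_blockDiagonal : IMA m Ah = blockDiagonal fun _ => Ah := by
  ext ⟨i, k⟩ ⟨j, l⟩
  by_cases h : k = l <;> simp [IMA, blockDiagonal_apply, h]

theorem rosenbrock_cascade_eq (lam : ℂ) :
    Rosenbrock (fromBlocks A (B * IMC m ch) 0 (IMA m Ah)) (fromRows B (IMB m bh))
      (fromCols C 0) lam
    = fromBlocks
        (fromBlocks (A.map ofReal - lam • 1)
          (B.map ofReal * blockCovec (Fin m) fun i => (ch i : ℂ)) 0
          (blockDiagonal fun _ => Ah.map ofReal - lam • 1))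
        (fromRows (B.map ofReal) (blockVec (Fin m) fun i => (bh i : ℂ)))
        (fromCols (C.map ofReal) 0) 0 := by
  have hIMB : IMB m bh = blockVec (Fin m) bh := rfl
  have hIMC : IMC m ch = blockCovec (Fin m) ch := rfl
  have hshift : (lam • 1 : Matrix (N ⊕ Fin p × Fin m) (N ⊕ Fin p × Fin m) ℂ)
      = fromBlocks (lam • 1) 0 0 (blockDiagonal fun _ => lam • 1) := by
    rw [← fromBlocks_one, fromBlocks_smul, ← blockDiagonal_one, ← blockDiagonal_smul]
    simp only [smul_zero]
    rfl
  rw [Rosenbrock, hshift, fromBlocks_map, IMA_eq_blockDiagonal, hIMB, hIMC, fromRows_map,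
    fromCols_map, blockDiagonal_map _ _ ofReal_zero, blockVec_map _ _ ofReal_zero]
  have hmul : (B * blockCovec (Fin m) ch).map ofReal
      = B.map ofReal * blockCovec (Fin m) fun i => (ch i : ℂ) := by
    rw [← blockCovec_map _ _ ofReal_zero]
    exact Matrix.map_mul (f := ofRealHom)
  rw [Matrix.map_zero _ ofReal_zero, Matrix.map_zero _ ofReal_zero, hmul, sub_eq_add_neg,
    fromBlocks_neg, fromBlocks_add, ← blockDiagonal_neg, ← blockDiagonal_add]
  simp only [neg_zero, add_zero, ← sub_eq_add_neg]
  rfl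

theorem det_rosenbrock_cascade_of_det_ne_zero {lam : ℂ}
    (hE : (lam • 1 - Ah.map ofReal).det ≠ 0) :
    (Rosenbrock (fromBlocks A (B * IMC m ch) 0 (IMA m Ah)) (fromRows B (IMB m bh))
      (fromCols C 0) lam).det
    = (Rosenbrock A B C lam).det
        * ((fun i => (ch i : ℂ)) ⬝ᵥ
            ((lam • 1 - Ah.map ofReal)⁻¹ *ᵥ fun i => (bh i : ℂ)) + 1) ^ m
        * (Ah.map ofReal - lam • 1).det ^ m := by
  have hk : (Ah.map ofReal - lam • 1) *ᵥ
      ((lam • 1 - Ah.map ofReal)⁻¹ *ᵥ fun i => (bh i : ℂ)) = -fun i => (bh i : ℂ) := by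
    rw [← neg_sub, neg_mulVec, mulVec_mulVec, mul_nonsing_inv _ (isUnit_iff_ne_zero.mpr hE),
      one_mulVec]
  rw [rosenbrock_cascade_eq, det_fromBlocks_cascade _ _ _ _ _ _ _ hk, Fintype.card_fin,
    add_comm _ 1]
  rfl

variable {A B C Ah bh ch} {α β : ℝ[X]}

theorem det_rosenbrock_cascade
    (hcharpoly : (Ah.map ofReal).charpoly = α.map (algebraMap ℝ ℂ))
    (htransfer : ∀ lam : ℂ, (lam • 1 - Ah.map ofReal).det ≠ 0 →
      (fun i => (ch i : ℂ)) ⬝ᵥ ((lam • 1 - Ah.map ofReal)⁻¹ *ᵥ fun i => (bh i : ℂ))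
        + 1 = aeval lam β / aeval lam α)
    (lam : ℂ) :
    (Rosenbrock (fromBlocks A (B * IMC m ch) 0 (IMA m Ah)) (fromRows B (IMB m bh))
      (fromCols C 0) lam).det
    = (-1) ^ (p * m) * aeval lam β ^ m * (Rosenbrock A B C lam).det := by
  obtain ⟨P, hP⟩ := exists_eval_eq_det_rosenbrock (fromBlocks A (B * IMC m ch) 0 (IMA m Ah))
    (fromRows B (IMB m bh)) (fromCols C 0)
  obtain ⟨P₀, hP₀⟩ := exists_eval_eq_det_rosenbrock A B C
  suffices P = Polynomial.C ((-1) ^ (p * m)) * (β.map (algebraMap ℝ ℂ)) ^ m * P₀ by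
    simpa [hP, hP₀, eval_map_algebraMap] using congrArg (eval lam) this
  refine eq_of_eval_eq_off_roots (Ah.map ofReal).charpoly_monic.ne_zero fun t ht => ?_
  rw [eval_charpoly_eq_det] at ht
  have hdet : (Ah.map ofReal - t • 1).det = (-1) ^ p * aeval t α := by
    rw [← neg_sub, det_neg, Fintype.card_fin, ← eval_charpoly_eq_det, hcharpoly,
      eval_map_algebraMap]
  have hcancel : aeval t β / aeval t α * ((-1) ^ p * aeval t α) = (-1) ^ p * aeval t β := by
    have hα : aeval t α ≠ 0 := by
      rwa [← eval_map_algebraMap, ← hcharpoly, eval_charpoly_eq_det]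
    field_simp
  rw [hP, det_rosenbrock_cascade_of_det_ne_zero A B C Ah bh ch ht, htransfer t ht, hdet,
    eval_mul, eval_mul, eval_pow, eval_C, eval_map_algebraMap, hP₀, mul_assoc, ← mul_pow,
    hcancel, mul_pow, ← pow_mul]
  ring

theorem minimumPhase_cascade (hmp : MinimumPhase A B C) (hβ : HurwitzPoly β)
    (hcharpoly : (Ah.map ofReal).charpoly = α.map (algebraMap ℝ ℂ))
    (htransfer : ∀ lam : ℂ, (lam • 1 - Ah.map ofReal).det ≠ 0 →
      (fun i => (ch i : ℂ)) ⬝ᵥ ((lam • 1 - Ah.map ofReal)⁻¹ *ᵥ fun i => (bh i : ℂ))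
        + 1 = aeval lam β / aeval lam α) :
    MinimumPhase (fromBlocks A (B * IMC m ch) 0 (IMA m Ah)) (fromRows B (IMB m bh))
      (fromCols C 0) := by
  intro lam hre
  have hR : (Rosenbrock A B C lam).det ≠ 0 :=
    det_ne_zero_of_rank_eq_card (by simpa using hmp lam hre)
  have hβlam : aeval lam β ≠ 0 := fun h => (hβ lam h).not_ge hre
  refine (rank_of_det_ne_zero ?_).trans (by simp)
  rw [det_rosenbrock_cascade hcharpoly htransfer]
  exact mul_ne_zero (mul_ne_zero (pow_ne_zero _ (by norm_num)) (pow_ne_zero _ hβlam)) hR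

end Complexification

theorem stmt_4_general (n m p r : ℕ)
    (A : Matrix (Fin n) (Fin n) ℝ) (B : Matrix (Fin n) (Fin m) ℝ) (C : Matrix (Fin m) (Fin n) ℝ)
    (hSigma : SigmaClass A B C r)
    (α β : Polynomial ℝ)
    (hαmonic : α.Monic) (hαdeg : α.natDegree = p)
    (hβHurwitz : HurwitzPoly β) (hcoprime : IsCoprime α β)
    (Ah : Matrix (Fin p) (Fin p) ℝ) (bh ch : Fin p → ℝ)
    (htransfer : ∀ lam : ℂ, (lam • (1 : Matrix (Fin p) (Fin p) ℂ) - Ah.map Complex.ofReal).det ≠ 0 →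
      (fun i => (ch i : ℂ)) ⬝ᵥ
          ((lam • (1 : Matrix (Fin p) (Fin p) ℂ) - Ah.map Complex.ofReal)⁻¹
            *ᵥ fun i => (bh i : ℂ)) + 1
        = Polynomial.aeval lam β / Polynomial.aeval lam α)
    (Aic : Matrix (Fin n ⊕ Fin p × Fin m) (Fin n ⊕ Fin p × Fin m) ℝ)
    (Bic : Matrix (Fin n ⊕ Fin p × Fin m) (Fin m) ℝ)
    (Cic : Matrix (Fin m) (Fin n ⊕ Fin p × Fin m) ℝ)
    (hAic : Aic = Matrix.fromBlocks A (B * IMC m ch) 0 (IMA m Ah))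
    (hBic : Bic = Matrix.fromRows B (IMB m bh))
    (hCic : Cic = Matrix.fromCols C 0) :
    SigmaClass Aic Bic Cic r ∧ Cic * Aic ^ (r - 1) * Bic = C * A ^ (r - 1) * B := by
  subst hAic hBic hCic
  obtain ⟨hrel, hmp, hpos⟩ := hSigma
  have hΓ := fromCols_mul_fromBlocks_pow_mul_fromRows A B C (IMC m ch) (IMA m Ah) (IMB m bh) hrel.1
  have hcharpoly : (Ah.map Complex.ofReal).charpoly = α.map (algebraMap ℝ ℂ) :=
    charpoly_eq_of_transfer (β := β.map (algebraMap ℝ ℂ)) (hαmonic.map _)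
      (by simp [hαmonic.natDegree_map, hαdeg]) (hcoprime.map (mapRingHom (algebraMap ℝ ℂ)))
      (by simpa only [eval_map_algebraMap] using htransfer)
  exact ⟨⟨strictRelDeg_cascade hrel _ _ _,
    minimumPhase_cascade hmp hβHurwitz hcharpoly htransfer, hΓ ▸ hpos⟩, hΓ⟩

/-- **The series interconnection with an internal model stays in the class `Σ_{m,r}`**
(Lemma on properties of the interconnection). -/
theorem stmt_4 (n m p r : ℕ)
    (A : Matrix (Fin n) (Fin n) ℝ) (B : Matrix (Fin n) (Fin m) ℝ) (C : Matrix (Fin m) (Fin n) ℝ)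
    (hSigma : SigmaClass A B C r)
    (α β : Polynomial ℝ)
    (hαmonic : α.Monic) (hαdeg : α.natDegree = p)
    (hαroots : ∀ lam : ℂ, Polynomial.aeval lam α = 0 → (Rosenbrock A B C lam).rank = n + m)
    (hβmonic : β.Monic) (hβdeg : β.natDegree = p)
    (hβHurwitz : HurwitzPoly β) (hcoprime : IsCoprime α β)
    (Ah : Matrix (Fin p) (Fin p) ℝ) (bh ch : Fin p → ℝ)
    (hctrb : Controllable Ah bh) (hobsv : Observable ch Ah)
    (htransfer : ∀ lam : ℂ, (lam • (1 : Matrix (Fin p) (Fin p) ℂ) - Ah.map Complex.ofReal).det ≠ 0 →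
      (fun i => (ch i : ℂ)) ⬝ᵥ
          ((lam • (1 : Matrix (Fin p) (Fin p) ℂ) - Ah.map Complex.ofReal)⁻¹
            *ᵥ fun i => (bh i : ℂ)) + 1
        = Polynomial.aeval lam β / Polynomial.aeval lam α)
    (Aic : Matrix (Fin n ⊕ Fin p × Fin m) (Fin n ⊕ Fin p × Fin m) ℝ)
    (Bic : Matrix (Fin n ⊕ Fin p × Fin m) (Fin m) ℝ)
    (Cic : Matrix (Fin m) (Fin n ⊕ Fin p × Fin m) ℝ)
    (hAic : Aic = Matrix.fromBlocks A (B * IMC m ch) 0 (IMA m Ah))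
    (hBic : Bic = Matrix.fromRows B (IMB m bh))
    (hCic : Cic = Matrix.fromCols C 0) :
    SigmaClass Aic Bic Cic r ∧ Cic * Aic ^ (r - 1) * Bic = C * A ^ (r - 1) * B :=
  stmt_4_general n m p r A B C hSigma α β hαmonic hαdeg hβHurwitz hcoprime Ah bh ch htransfer Aic
    Bic Cic hAic hBic hCic
end
end

section
/- Let A ∈ ℝ^{n×n}, B ∈ ℝ^{n×m}, C ∈ ℝ^{m×n}, r ≥ 1, and suppose C A^k B = 0 for all k = 0,…,r−2. Let p ∈ ℝ[s] be a polynomial of degree at most r−1. Then for every λ ∈ ℂ that is not an eigenvalue of A: C p(A) (λI − A)^{−1} B = p(λ) · C (λI − A)^{−1} B. -/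
open Matrix Polynomial

private lemma mapmul {a b c : ℕ} (X : Matrix (Fin a) (Fin b) ℝ) (Y : Matrix (Fin b) (Fin c) ℝ) :
    (X * Y).map Complex.ofReal = X.map Complex.ofReal * Y.map Complex.ofReal := by
  ext i j; simp [Matrix.mul_apply]

private lemma mappow {a : ℕ} (X : Matrix (Fin a) (Fin a) ℝ) (k : ℕ) :
    (X ^ k).map Complex.ofReal = (X.map Complex.ofReal) ^ k := by
  induction k with
  | zero => ext i j; simp [Matrix.one_apply]; split <;> simp
  | succ k ih => rw [pow_succ, pow_succ, mapmul, ih]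

/-- **Polynomial of the state matrix in the transfer function.**
If `C A^k B = 0` for `k = 0,…,r−2` and `deg p ≤ r−1`, then for every `λ` that is not an
eigenvalue of `A`: `C p(A) (λI − A)⁻¹ B = p(λ) · C (λI − A)⁻¹ B`. -/
theorem stmt_5 (n m r : ℕ) (hr : 1 ≤ r)
    (A : Matrix (Fin n) (Fin n) ℝ) (B : Matrix (Fin n) (Fin m) ℝ) (C : Matrix (Fin m) (Fin n) ℝ)
    (hMarkov : ∀ k, k < r - 1 → C * A ^ k * B = 0)
    (p : Polynomial ℝ) (hdeg : p.natDegree ≤ r - 1)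
    (lam : ℂ)
    (hlam : (lam • (1 : Matrix (Fin n) (Fin n) ℂ) - A.map Complex.ofReal).det ≠ 0) :
    (C * Polynomial.aeval A p).map Complex.ofReal
        * (lam • (1 : Matrix (Fin n) (Fin n) ℂ) - A.map Complex.ofReal)⁻¹
        * B.map Complex.ofReal
      = Polynomial.aeval lam p •
          (C.map Complex.ofReal
            * (lam • (1 : Matrix (Fin n) (Fin n) ℂ) - A.map Complex.ofReal)⁻¹
            * B.map Complex.ofReal) := by
  set M : Matrix (Fin n) (Fin n) ℂ := A.map Complex.ofReal with hMdef
  set Cc : Matrix (Fin m) (Fin n) ℂ := C.map Complex.ofReal with hCc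
  set Bc : Matrix (Fin n) (Fin m) ℂ := B.map Complex.ofReal with hBc
  set S : Matrix (Fin n) (Fin n) ℂ := lam • (1 : Matrix (Fin n) (Fin n) ℂ) - M with hS
  set P : Polynomial ℂ := p.map (algebraMap ℝ ℂ) with hP
  have hu : IsUnit S.det := isUnit_iff_ne_zero.mpr hlam
  obtain ⟨q, hq⟩ : (X - Polynomial.C lam) ∣ P - Polynomial.C (P.eval lam) :=
    X_sub_C_dvd_sub_C_eval
  have hqsup : ∀ k, q.coeff k ≠ 0 → k < r - 1 := by
    intro k hk
    have hq0 : q ≠ 0 := fun h => hk (by simp [h])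
    have hdq : q.natDegree + 1 ≤ r - 1 := by
      have h1 : ((X - Polynomial.C lam) * q).natDegree = 1 + q.natDegree := by
        rw [natDegree_mul (X_sub_C_ne_zero lam) hq0, natDegree_X_sub_C]
      have h2 : ((X - Polynomial.C lam) * q).natDegree ≤ r - 1 := by
        rw [← hq, natDegree_sub_C]
        exact le_trans natDegree_map_le hdeg
      omega
    have := le_natDegree_of_ne_zero hk
    omega
  have hzero : Cc * Polynomial.aeval M q * Bc = 0 := by
    rw [Polynomial.aeval_eq_sum_range, Matrix.mul_sum, Matrix.sum_mul]
    apply Finset.sum_eq_zero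
    intro i _
    by_cases hci : q.coeff i = 0
    · simp [hci]
    · have hi : i < r - 1 := hqsup i hci
      have hterm : Cc * M ^ i * Bc = 0 := by
        have h0 : (C * A ^ i * B).map (Complex.ofReal) = 0 := by
          rw [hMarkov i hi]; ext j k; simp
        rw [mapmul, mapmul, mappow] at h0
        exact h0
      rw [Matrix.mul_smul, Matrix.smul_mul, hterm, smul_zero]
  have hmap : (Polynomial.aeval A p).map Complex.ofReal = Polynomial.aeval M p := by
    exact (Polynomial.aeval_algHom_apply
      (AlgHom.mapMatrix Complex.ofRealAm :
        Matrix (Fin n) (Fin n) ℝ →ₐ[ℝ] Matrix (Fin n) (Fin n) ℂ) A p).symm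
  have haevalP : Polynomial.aeval M p = Polynomial.aeval M P := by
    rw [hP, Polynomial.aeval_map_algebraMap]
  have hfact : Polynomial.aeval M P
      = (P.eval lam) • (1 : Matrix (Fin n) (Fin n) ℂ)
        + Polynomial.aeval M q * (M - lam • 1) := by
    have hq' : P = Polynomial.C (P.eval lam) + q * (X - Polynomial.C lam) := by
      rw [mul_comm q]; linear_combination (norm := ring_nf) hq
    conv_lhs => rw [hq']
    simp only [_root_.map_add, _root_.map_mul, map_sub, Polynomial.aeval_C, Polynomial.aeval_X,
      Algebra.algebraMap_eq_smul_one]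
  have hMS : (M - lam • 1) * S⁻¹ = -1 := by
    have hns : M - lam • 1 = -S := by rw [hS, neg_sub]
    rw [hns, neg_mul, Matrix.mul_nonsing_inv _ hu]
  have heval : P.eval lam = Polynomial.aeval lam p := by
    rw [hP, Polynomial.eval_map, Polynomial.aeval_def]
  rw [mapmul, ← hCc, hmap, haevalP, hfact]
  rw [Matrix.mul_add, Matrix.mul_smul, Matrix.mul_one, Matrix.add_mul, Matrix.add_mul,
    Matrix.smul_mul, Matrix.smul_mul,
    ← Matrix.mul_assoc Cc (Polynomial.aeval M q) (M - lam • 1),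
    Matrix.mul_assoc (Cc * Polynomial.aeval M q) (M - lam • 1) S⁻¹, hMS,
    Matrix.mul_neg, Matrix.mul_one, Matrix.neg_mul, hzero, neg_zero, add_zero, heval]
end

section
/- Let (A,B,C) ∈ Σ_{m,r} with r ≥ 1 and Γ = C A^{r−1} B, and let p ∈ ℝ[s] be a monic Hurwitz polynomial of degree r−1. Then the system (A, B, C p(A)) has strict relative degree one with C p(A) B = Γ, and it is minimum phase; i.e., (A, B, C p(A)) ∈ Σ_{m,1}. -/
/-!
If `(A - λ)x + Bu = 0`, the vanishing Markov parameters `C Aᵏ B` (`k < r - 1`) give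
`C Aᵏ x = λᵏ C x` for `k ≤ r - 1`, hence `C p(A) x = p(λ) C x`. For `Re λ ≥ 0` the Hurwitz
polynomial has `p(λ) ≠ 0`, so every kernel vector of the Rosenbrock matrix of `(A, B, C p(A))`
is one of `(A, B, C)`, and there is none by minimum phase. The same Markov parameters give
`C p(A) B = C A^{r-1} B`, since `p` is monic of degree `r - 1`.
-/

open Matrix Polynomial

noncomputable section

namespace Matrix

theorem rank_eq_card_iff_forall_mulVec_eq_zero {K ι : Type*} [Field K] [Fintype ι]
    [DecidableEq ι] (M : Matrix ι ι K) :
    M.rank = Fintype.card ι ↔ ∀ v, M *ᵥ v = 0 → v = 0 := by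
  have h := LinearMap.finrank_range_add_finrank_ker M.mulVecLin
  rw [Module.finrank_fintype_fun_eq_card] at h
  rw [← ker_mulVecLin_eq_bot_iff, ← Submodule.finrank_eq_zero (R := K), rank]
  omega

theorem map_aeval {R S T ι : Type*} [CommSemiring R] [Semiring S] [Semiring T]
    [Algebra R S] [Algebra R T] [Fintype ι] [DecidableEq ι] (f : S →ₐ[R] T) (A : Matrix ι ι S)
    (p : R[X]) : (aeval A p).map f = aeval (A.map f) p :=
  (aeval_algHom_apply f.mapMatrix A p).symm

variable {R K ι κ κ' : Type*} [CommRing R] [CommRing K] [Algebra R K] [Fintype ι]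
  [DecidableEq ι]

theorem mul_aeval_mul_eq_of_monic {A : Matrix ι ι R} {B : Matrix ι κ R} {C : Matrix κ' ι R}
    {d : ℕ} (hCAB : ∀ k < d, C * A ^ k * B = 0) {p : R[X]} (hp : p.Monic)
    (hdeg : p.natDegree = d) : C * aeval A p * B = C * A ^ d * B := by
  rw [aeval_eq_sum_range, Matrix.mul_sum, Matrix.sum_mul, Finset.sum_eq_single d]
  · simp [← hdeg, hp.coeff_natDegree]
  · intro k hk hkd
    have hkd : k < d := by simp only [Finset.mem_range, hdeg] at hk; omega
    simp [hCAB k hkd]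
  · simp [hdeg]

section MarkovParameters

variable [Fintype κ] {A : Matrix ι ι K} {B : Matrix ι κ K} {C : Matrix κ' ι K} {d : ℕ}
  {lam : K} {x : ι → K} {u : κ → K}

theorem mulVec_pow_mulVec_eq_pow_smul (hCAB : ∀ k < d, C * A ^ k * B = 0)
    (hxu : (A - lam • 1) *ᵥ x + B *ᵥ u = 0) : ∀ k ≤ d, C *ᵥ (A ^ k *ᵥ x) = lam ^ k • C *ᵥ x := by
  have hAx : A *ᵥ x = lam • x - B *ᵥ u := by
    rw [sub_mulVec, smul_mulVec, one_mulVec] at hxu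
    rw [eq_sub_iff_add_eq, ← sub_eq_zero, ← hxu]
    abel
  intro k hk
  induction k with
  | zero => simp
  | succ k ih =>
    have hCAkB : C *ᵥ (A ^ k *ᵥ (B *ᵥ u)) = 0 := by
      rw [mulVec_mulVec, mulVec_mulVec, hCAB k hk, zero_mulVec]
    rw [pow_succ, ← mulVec_mulVec, hAx, mulVec_sub, mulVec_sub, mulVec_smul, mulVec_smul,
      hCAkB, ih (by omega), sub_zero, smul_smul, pow_succ']

theorem mulVec_aeval_mulVec_eq_aeval_smul (hCAB : ∀ k < d, C * A ^ k * B = 0)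
    (hxu : (A - lam • 1) *ᵥ x + B *ᵥ u = 0) {p : R[X]} (hp : p.natDegree ≤ d) :
    C *ᵥ (aeval A p *ᵥ x) = aeval lam p • C *ᵥ x := by
  have hlt : p.natDegree < d + 1 := Nat.lt_succ_of_le hp
  rw [aeval_eq_sum_range' hlt, aeval_eq_sum_range' hlt, sum_mulVec, mulVec_sum, Finset.sum_smul]
  refine Finset.sum_congr rfl fun k hk => ?_
  rw [smul_mulVec, mulVec_smul,
    mulVec_pow_mulVec_eq_pow_smul hCAB hxu k (Nat.lt_succ_iff.mp (Finset.mem_range.mp hk)),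
    smul_assoc]

end MarkovParameters

end Matrix

section Rosenbrock

variable {N : Type*} [Fintype N] [DecidableEq N] {m : ℕ}
  {A : Matrix N N ℝ} {B : Matrix N (Fin m) ℝ} {C : Matrix (Fin m) N ℝ}

theorem rosenbrock_mulVec_eq_zero_iff {lam : ℂ} {v : N ⊕ Fin m → ℂ} :
    Rosenbrock A B C lam *ᵥ v = 0 ↔
      (A.map Complex.ofReal - lam • 1) *ᵥ (v ∘ Sum.inl) + B.map Complex.ofReal *ᵥ (v ∘ Sum.inr)
        = 0 ∧ C.map Complex.ofReal *ᵥ (v ∘ Sum.inl) = 0 := by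
  rw [Rosenbrock, fromBlocks_mulVec, ← Sum.elim_zero_zero, Sum.elim_eq_iff, zero_mulVec,
    add_zero]

theorem minimumPhase_iff :
    MinimumPhase A B C ↔
      ∀ lam : ℂ, 0 ≤ lam.re → ∀ v, Rosenbrock A B C lam *ᵥ v = 0 → v = 0 := by
  simp only [MinimumPhase, ← Matrix.rank_eq_card_iff_forall_mulVec_eq_zero, Fintype.card_sum,
    Fintype.card_fin]

theorem MinimumPhase.mul_aeval (hMP : MinimumPhase A B C) {d : ℕ}
    (hCAB : ∀ k < d, C * A ^ k * B = 0) {p : ℝ[X]} (hp : p.natDegree ≤ d)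
    (hHurwitz : HurwitzPoly p) : MinimumPhase A B (C * aeval A p) := by
  rw [minimumPhase_iff] at hMP ⊢
  intro lam hlam v hv
  refine hMP lam hlam v ?_
  rw [rosenbrock_mulVec_eq_zero_iff] at hv ⊢
  obtain ⟨hxu, hCpx⟩ := hv
  refine ⟨hxu, ?_⟩
  have hCABc : ∀ k < d,
      C.map Complex.ofReal * A.map Complex.ofReal ^ k * B.map Complex.ofReal = 0 := by
    intro k hk
    change C.map Complex.ofRealHom * A.map Complex.ofRealHom ^ k * B.map Complex.ofRealHom = 0
    rw [← Matrix.map_pow, ← Matrix.map_mul, ← Matrix.map_mul, hCAB k hk, Matrix.map_zero _ rfl]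
  have hCp : (C * aeval A p).map Complex.ofReal
      = C.map Complex.ofReal * aeval (A.map Complex.ofReal) p :=
    (Matrix.map_mul (f := Complex.ofRealHom)).trans
      (congr_arg _ (Matrix.map_aeval Complex.ofRealAm A p))
  have hplam : aeval lam p ≠ 0 := fun h => (hHurwitz lam h).not_ge hlam
  rw [hCp, ← mulVec_mulVec, mulVec_aeval_mulVec_eq_aeval_smul hCABc hxu hp] at hCpx
  exact (smul_eq_zero.mp hCpx).resolve_left hplam

end Rosenbrock

theorem stmt_7_general (n m r : ℕ)
    (A : Matrix (Fin n) (Fin n) ℝ) (B : Matrix (Fin n) (Fin m) ℝ) (C : Matrix (Fin m) (Fin n) ℝ)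
    (hSigma : SigmaClass A B C r)
    (p : Polynomial ℝ) (hmonic : p.Monic) (hdeg : p.natDegree = r - 1)
    (hHurwitz : HurwitzPoly p) :
    SigmaClass A B (C * Polynomial.aeval A p) 1 ∧
    (C * Polynomial.aeval A p) * B = C * A ^ (r - 1) * B := by
  obtain ⟨⟨hCAB, hΓ⟩, hMP, hΓpos⟩ := hSigma
  have hCpB : C * aeval A p * B = C * A ^ (r - 1) * B :=
    Matrix.mul_aeval_mul_eq_of_monic hCAB hmonic hdeg
  have hCpB' : C * aeval A p * A ^ (1 - 1) * B = C * A ^ (r - 1) * B := by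
    rw [Nat.sub_self, pow_zero, Matrix.mul_one, hCpB]
  exact ⟨⟨⟨fun k hk => absurd hk (Nat.not_lt_zero k), hCpB' ▸ hΓ⟩,
    hMP.mul_aeval hCAB hdeg.le hHurwitz, hCpB' ▸ hΓpos⟩, hCpB⟩

/-- **Relative degree reduction by a Hurwitz polynomial of the state matrix.**
If `(A,B,C) ∈ Σ_{m,r}` and `p` is monic Hurwitz of degree `r−1`, then
`(A, B, C p(A)) ∈ Σ_{m,1}` and `C p(A) B = C A^{r−1} B`. -/
theorem stmt_7 (n m r : ℕ) (hr : 1 ≤ r)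
    (A : Matrix (Fin n) (Fin n) ℝ) (B : Matrix (Fin n) (Fin m) ℝ) (C : Matrix (Fin m) (Fin n) ℝ)
    (hSigma : SigmaClass A B C r)
    (p : Polynomial ℝ) (hmonic : p.Monic) (hdeg : p.natDegree = r - 1)
    (hHurwitz : HurwitzPoly p) :
    SigmaClass A B (C * Polynomial.aeval A p) 1 ∧
    (C * Polynomial.aeval A p) * B = C * A ^ (r - 1) * B :=
  stmt_7_general n m r A B C hSigma p hmonic hdeg hHurwitz
end
end

section
/- Let ω ∈ (0,∞], r ≥ 2, m ∈ ℕ, and let e : [0,ω) → ℝ^m be (r−1)-times continuously differentiable. Given k_1,…,k_{r−1} > 0, define recursively e_1 := e and e_{i+1} := ė_i + k_i e_i for i = 1,…,r−1. Let φ_1,…,φ_r ∈ Φ be such that the quantities M_i := sup_{t≥0} |φ̇_i(t)/φ_i(t)| and N_i := sup_{t≥0} φ_i(t)/φ_{i+1}(t) are finite, and assume (K1): k_i > M_i + N_i for i = 1,…,r−1 and (K2): φ_i(0)‖e_i(0)‖ < 1 for i = 1,…,r. If φ_r(t)‖e_r(t)‖ < 1 for all t ∈ [0,ω), then for every i = 1,…,r−1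 and all t ∈ [0,ω): φ_i(t)‖e_i(t)‖ ≤ ε_i, where ε_i := max{ φ_i(0)‖e_i(0)‖, (M_i + N_i)/k_i } and ε_i < 1. -/
/-! Write `v t = φ t ‖e t‖`. While `v` stays above `(M + N) / k`, the derivative of
`v² = ‖φ • e‖²` is at most `2 v (N - (k - M) v) ≤ 0`: the gain `k` dominates the relative
growth `M` of the funnel and the forcing term, which is at most `N` because the next error lies
in its own funnel. Hence `v` can never climb above `max (v 0) ((M + N) / k)`, and (K1), (K2) make
this bound smaller than `1`. Downward induction from `e_r` then feeds each bound into the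
previous error. -/

open Set Filter

noncomputable section

/-- Euclidean space `ℝ^m`. -/
abbrev Euc (m : ℕ) := EuclideanSpace ℝ (Fin m)

/-- Membership in the funnel class `Φ`: `φ` is continuously differentiable on `[0,∞)` with
derivative `φ'`, both `φ` and `φ'` are bounded there, `φ(t) > 0` for `t > 0`, and
`liminf_{t→∞} φ(t) > 0`. -/
def FunnelFun (φ φ' : ℝ → ℝ) : Prop :=
  (∀ t ∈ Ici (0 : ℝ), HasDerivWithinAt φ (φ' t) (Ici 0) t) ∧
  ContinuousOn φ' (Ici 0) ∧
  (∃ M, ∀ t ∈ Ici (0 : ℝ), |φ t| ≤ M) ∧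
  (∃ M, ∀ t ∈ Ici (0 : ℝ), |φ' t| ≤ M) ∧
  (∀ t : ℝ, 0 < t → 0 < φ t) ∧
  0 < Filter.liminf φ Filter.atTop

open scoped RealInnerProductSpace Topology

theorem le_max_of_hasDerivAt_nonpos_of_lt {W W' : ℝ → ℝ} {a b c : ℝ} (hab : a ≤ b)
    (hcont : ContinuousOn W (Icc a b))
    (hderiv : ∀ x ∈ Ioo a b, c < W x → HasDerivAt W (W' x) x)
    (hnonpos : ∀ x ∈ Ioo a b, c < W x → W' x ≤ 0) :
    W b ≤ max (W a) c := by
  set S := Icc a b ∩ W ⁻¹' Iic (max (W a) c)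
  have hS : IsClosed S := hcont.preimage_isClosed_of_isClosed isClosed_Icc isClosed_Iic
  have haS : a ∈ S := ⟨⟨le_rfl, hab⟩, le_max_left (W a) c⟩
  have hbdd : BddAbove S := bddAbove_Icc.mono inter_subset_left
  -- `s` is the last time at which `W` is below the bound
  set s := sSup S
  have hsS : s ∈ S := hS.csSup_mem ⟨a, haS⟩ hbdd
  have has : a ≤ s := le_csSup hbdd haS
  by_contra! hb
  have hsb : s < b := hsS.1.2.lt_of_ne fun h => hb.not_ge (h ▸ hsS.2)
  have hgt : ∀ x ∈ Ioo s b, c < W x := fun x hx => not_le.1 fun hx' =>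
    hx.1.not_ge (le_csSup hbdd ⟨⟨has.trans hx.1.le, hx.2.le⟩, le_max_of_le_right hx'⟩)
  have hIoo : ∀ x ∈ Ioo s b, x ∈ Ioo a b := fun x hx => ⟨has.trans_lt hx.1, hx.2⟩
  have hanti : AntitoneOn W (Icc s b) := by
    refine antitoneOn_of_hasDerivWithinAt_nonpos (f' := W') (convex_Icc s b)
      (hcont.mono (Icc_subset_Icc has le_rfl)) ?_ ?_ <;> rw [interior_Icc] <;> intro x hx
    · exact (hderiv x (hIoo x hx) (hgt x hx)).hasDerivWithinAt
    · exact hnonpos x (hIoo x hx) (hgt x hx)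
  exact hb.not_ge ((hanti ⟨le_rfl, hsb.le⟩ ⟨hsb.le, le_rfl⟩ hsb.le).trans hsS.2)

theorem le_sub_mul_of_add_div_le {k M N v : ℝ} (hM : 0 ≤ M) (hN : 0 ≤ N) (hk : M + N < k)
    (hv : (M + N) / k ≤ v) : N ≤ (k - M) * v := by
  have hk0 : 0 < k := by linarith
  rw [div_le_iff₀ hk0] at hv
  nlinarith [mul_le_mul_of_nonneg_left hv (by linarith : 0 ≤ k - M)]

theorem FunnelFun.nonneg {φ φ' : ℝ → ℝ} (hφ : FunnelFun φ φ') {t : ℝ} (ht : 0 ≤ t) :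
    0 ≤ φ t := by
  rcases ht.eq_or_lt with rfl | ht
  · have hcont : ContinuousWithinAt φ (Ioi 0) 0 :=
      (hφ.1 0 self_mem_Ici).continuousWithinAt.mono Ioi_subset_Ici_self
    exact ge_of_tendsto hcont (eventually_mem_nhdsWithin.mono fun x hx => (hφ.2.2.2.2.1 x hx).le)
  · exact (hφ.2.2.2.2.1 t ht).le

section InnerProductSpace

variable {E : Type*} [NormedAddCommGroup E] [InnerProductSpace ℝ E]

theorem inner_smul_add_smul_nonpos {e f : E} {a a' k M N : ℝ} (ha : 0 ≤ a)
    (ha' : a' ≤ M * a) (hf : a * ‖f‖ ≤ N) (hN : N ≤ (k - M) * (a * ‖e‖)) :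
    ⟪a • e, a • (f - k • e) + a' • e⟫ ≤ 0 := by
  have hexpand : ⟪a • e, a • (f - k • e) + a' • e⟫
      = a ^ 2 * ⟪e, f⟫ - k * (a * ‖e‖) ^ 2 + a' * a * ‖e‖ ^ 2 := by
    simp only [inner_add_right, inner_sub_right, real_inner_smul_left, real_inner_smul_right,
      real_inner_self_eq_norm_sq]
    ring
  have hef : a ^ 2 * ⟪e, f⟫ ≤ (a * ‖e‖) * (a * ‖f‖) := by
    nlinarith [mul_le_mul_of_nonneg_left (real_inner_le_norm e f) (sq_nonneg a)]
  have hv : 0 ≤ a * ‖e‖ := mul_nonneg ha (norm_nonneg e)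
  rw [hexpand]
  nlinarith [mul_le_mul_of_nonneg_left hf hv, mul_le_mul_of_nonneg_left hN hv,
    mul_le_mul_of_nonneg_right ha' (mul_nonneg ha (sq_nonneg ‖e‖))]

theorem mul_norm_le_max_of_hasDerivWithinAt {e f : ℝ → E} {φ φ' : ℝ → ℝ} {a b k M N : ℝ}
    (hab : a ≤ b) (he : ∀ t ∈ Icc a b, HasDerivWithinAt e (f t - k • e t) (Icc a b) t)
    (hφ : ∀ t ∈ Icc a b, HasDerivWithinAt φ (φ' t) (Icc a b) t)
    (hφ_nonneg : ∀ t ∈ Icc a b, 0 ≤ φ t) (hM : 0 ≤ M) (hN : 0 ≤ N) (hk : M + N < k)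
    (hφ' : ∀ t ∈ Ioo a b, φ' t ≤ M * φ t) (hf : ∀ t ∈ Ioo a b, φ t * ‖f t‖ ≤ N) :
    φ b * ‖e b‖ ≤ max (φ a * ‖e a‖) ((M + N) / k) := by
  set c := (M + N) / k
  have hc : 0 ≤ c := div_nonneg (by linarith) (by linarith)
  have hv : ∀ t ∈ Icc a b, 0 ≤ φ t * ‖e t‖ := fun t ht =>
    mul_nonneg (hφ_nonneg t ht) (norm_nonneg _)
  have hsq : ∀ t ∈ Icc a b, ‖φ t • e t‖ ^ 2 = (φ t * ‖e t‖) ^ 2 := fun t ht => by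
    rw [norm_smul, Real.norm_of_nonneg (hφ_nonneg t ht)]
  have hcont : ContinuousOn (fun t => ‖φ t • e t‖ ^ 2) (Icc a b) :=
    ((ContinuousOn.smul (fun t ht => (hφ t ht).continuousWithinAt)
      (fun t ht => (he t ht).continuousWithinAt)).norm).pow 2
  have hderiv : ∀ x ∈ Ioo a b, HasDerivAt (fun t => ‖φ t • e t‖ ^ 2)
      (2 * ⟪φ x • e x, φ x • (f x - k • e x) + φ' x • e x⟫) x := fun x hx => by
    have hnhds : Icc a b ∈ 𝓝 x := Icc_mem_nhds hx.1 hx.2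
    exact (((hφ x (Ioo_subset_Icc_self hx)).hasDerivAt hnhds).smul
      ((he x (Ioo_subset_Icc_self hx)).hasDerivAt hnhds)).norm_sq
  have key := le_max_of_hasDerivAt_nonpos_of_lt (c := c ^ 2) hab hcont
    (fun x hx _ => hderiv x hx) fun x hx hlt => by
      have hx' : x ∈ Icc a b := Ioo_subset_Icc_self hx
      rw [hsq x hx', sq_lt_sq₀ hc (hv x hx')] at hlt
      have := inner_smul_add_smul_nonpos (hφ_nonneg x hx') (hφ' x hx) (hf x hx)
        (le_sub_mul_of_add_div_le hM hN hk hlt.le)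
      linarith
  have hb : b ∈ Icc a b := ⟨hab, le_rfl⟩
  have ha : a ∈ Icc a b := ⟨le_rfl, hab⟩
  rw [hsq b hb, hsq a ha] at key
  rcases le_max_iff.1 key with h | h
  · exact le_max_of_le_left ((sq_le_sq₀ (hv b hb) (hv a ha)).1 h)
  · exact le_max_of_le_right ((sq_le_sq₀ (hv b hb) hc).1 h)

theorem mul_norm_le_max_of_funnelFun {D : Set ℝ} (hD : ∀ t ∈ D, 0 ≤ t ∧ Icc 0 t ⊆ D)
    {e f : ℝ → E} {φ φ' ψ ψ' : ℝ → ℝ} {k M N : ℝ} (hφ : FunnelFun φ φ') (hψ : FunnelFun ψ ψ')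
    (hM : ∀ t ∈ Ici (0 : ℝ), |φ' t / φ t| ≤ M) (hN : ∀ t ∈ Ici (0 : ℝ), φ t / ψ t ≤ N)
    (hk : M + N < k) (he : ∀ t ∈ D, HasDerivWithinAt e (f t - k • e t) D t)
    (hf : ∀ t ∈ D, ψ t * ‖f t‖ ≤ 1) :
    ∀ t ∈ D, φ t * ‖e t‖ ≤ max (φ 0 * ‖e 0‖) ((M + N) / k) := by
  have hφpos := hφ.2.2.2.2.1
  have hψpos := hψ.2.2.2.2.1
  have hM0 : 0 ≤ M := (abs_nonneg _).trans (hM 0 self_mem_Ici)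
  have hN0 : 0 ≤ N :=
    (div_pos (hφpos 1 one_pos) (hψpos 1 one_pos)).le.trans (hN 1 (mem_Ici.2 zero_le_one))
  intro T hT
  obtain ⟨hT0, hIcc⟩ := hD T hT
  refine mul_norm_le_max_of_hasDerivWithinAt hT0
    (fun t ht => (he t (hIcc ht)).mono hIcc)
    (fun t ht => (hφ.1 t ht.1).mono fun x hx => hx.1)
    (fun t ht => hφ.nonneg ht.1) hM0 hN0 hk (fun t ht => ?_) (fun t ht => ?_)
  · have hφt := hφpos t ht.1
    have := (le_abs_self _).trans (hM t ht.1.le)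
    rwa [div_le_iff₀ hφt] at this
  · have hψt := hψpos t ht.1
    calc φ t * ‖f t‖ = φ t / ψ t * (ψ t * ‖f t‖) := by field_simp
      _ ≤ N * 1 := mul_le_mul (hN t ht.1.le) (hf t (hIcc (Ioo_subset_Icc_self ht)))
          (mul_nonneg hψt.le (norm_nonneg _)) hN0
      _ = N := mul_one N

end InnerProductSpace

theorem stmt_8_general (m r : ℕ) (ω : EReal)
    (D : Set ℝ) (hD : D = {t : ℝ | 0 ≤ t ∧ (t : EReal) < ω})
    (k : ℕ → ℝ) (hk : ∀ i, 1 ≤ i → i ≤ r - 1 → 0 < k i)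
    -- the auxiliary error signals: `esig 1 = e` and `e_{i+1} = ė_i + k_i e_i` on `[0,ω)`
    (esig : ℕ → ℝ → Euc m)
    (hesig : ∀ i, 1 ≤ i → i ≤ r - 1 → ∀ t ∈ D,
      HasDerivWithinAt (esig i) (esig (i + 1) t - k i • esig i t) D t)
    (φ φ' : ℕ → ℝ → ℝ)
    (hΦ : ∀ i, 1 ≤ i → i ≤ r → FunnelFun (φ i) (φ' i))
    (M N : ℕ → ℝ)
    (hM : ∀ i, 1 ≤ i → i ≤ r - 1 →
      IsLUB {x : ℝ | ∃ t ∈ Ici (0 : ℝ), x = |φ' i t / φ i t|} (M i))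
    (hN : ∀ i, 1 ≤ i → i ≤ r - 1 →
      IsLUB {x : ℝ | ∃ t ∈ Ici (0 : ℝ), x = φ i t / φ (i + 1) t} (N i))
    (hK1 : ∀ i, 1 ≤ i → i ≤ r - 1 → M i + N i < k i)
    (hK2 : ∀ i, 1 ≤ i → i ≤ r → φ i 0 * ‖esig i 0‖ < 1)
    (hfunnel : ∀ t ∈ D, φ r t * ‖esig r t‖ < 1) :
    ∀ i, 1 ≤ i → i ≤ r - 1 →
      (∀ t ∈ D, φ i t * ‖esig i t‖ ≤ max (φ i 0 * ‖esig i 0‖) ((M i + N i) / k i)) ∧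
      max (φ i 0 * ‖esig i 0‖) ((M i + N i) / k i) < 1 := by
  have hDIcc : ∀ t ∈ D, 0 ≤ t ∧ Icc 0 t ⊆ D := by
    subst hD
    exact fun t ht => ⟨ht.1, fun x hx => ⟨hx.1, (EReal.coe_le_coe_iff.2 hx.2).trans_lt ht.2⟩⟩
  have hstep : ∀ i, 1 ≤ i → i ≤ r - 1 → (∀ t ∈ D, φ (i + 1) t * ‖esig (i + 1) t‖ ≤ 1) →
      (∀ t ∈ D, φ i t * ‖esig i t‖ ≤ max (φ i 0 * ‖esig i 0‖) ((M i + N i) / k i)) ∧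
      max (φ i 0 * ‖esig i 0‖) ((M i + N i) / k i) < 1 := fun i h1 h2 hnext =>
    ⟨mul_norm_le_max_of_funnelFun hDIcc (hΦ i h1 (by omega)) (hΦ (i + 1) (by omega) (by omega))
      (fun t ht => (hM i h1 h2).1 ⟨t, ht, rfl⟩) (fun t ht => (hN i h1 h2).1 ⟨t, ht, rfl⟩)
      (hK1 i h1 h2) (hesig i h1 h2) hnext,
     max_lt (hK2 i h1 (by omega)) ((div_lt_one (hk i h1 h2)).2 (hK1 i h1 h2))⟩
  have hbound : ∀ i, 1 ≤ i → i ≤ r → ∀ t ∈ D, φ i t * ‖esig i t‖ ≤ 1 := by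
    intro i h1 hir
    induction hir using Nat.decreasingInduction with
    | self => exact fun t ht => (hfunnel t ht).le
    | of_succ j hj ih =>
      have := hstep j h1 (by omega) (ih (by omega))
      exact fun t ht => (this.1 t ht).trans this.2.le
  exact fun i h1 h2 => hstep i h1 h2 (hbound (i + 1) (by omega) (by omega))

/-- **Funnel estimates for the auxiliary error signals (Lemma `lem:epsi`).**
If the last auxiliary error `e_r` evolves in its funnel, then under (K1) and (K2) each
`e_i`, `i = 1,…,r−1`, satisfies `φ_i(t) ‖e_i(t)‖ ≤ ε_i < 1` on `[0,ω)`, with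
`ε_i = max{ φ_i(0)‖e_i(0)‖, (M_i+N_i)/k_i }`. -/
theorem stmt_8 (m r : ℕ) (hr : 2 ≤ r) (ω : EReal) (hω : 0 < ω)
    (D : Set ℝ) (hD : D = {t : ℝ | 0 ≤ t ∧ (t : EReal) < ω})
    (k : ℕ → ℝ) (hk : ∀ i, 1 ≤ i → i ≤ r - 1 → 0 < k i)
    -- the auxiliary error signals: `esig 1 = e` and `e_{i+1} = ė_i + k_i e_i` on `[0,ω)`
    (esig : ℕ → ℝ → Euc m)
    (hesig : ∀ i, 1 ≤ i → i ≤ r - 1 → ∀ t ∈ D,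
      HasDerivWithinAt (esig i) (esig (i + 1) t - k i • esig i t) D t)
    (φ φ' : ℕ → ℝ → ℝ)
    (hΦ : ∀ i, 1 ≤ i → i ≤ r → FunnelFun (φ i) (φ' i))
    (M N : ℕ → ℝ)
    (hM : ∀ i, 1 ≤ i → i ≤ r - 1 →
      IsLUB {x : ℝ | ∃ t ∈ Ici (0 : ℝ), x = |φ' i t / φ i t|} (M i))
    (hN : ∀ i, 1 ≤ i → i ≤ r - 1 →
      IsLUB {x : ℝ | ∃ t ∈ Ici (0 : ℝ), x = φ i t / φ (i + 1) t} (N i))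
    (hK1 : ∀ i, 1 ≤ i → i ≤ r - 1 → M i + N i < k i)
    (hK2 : ∀ i, 1 ≤ i → i ≤ r → φ i 0 * ‖esig i 0‖ < 1)
    (hfunnel : ∀ t ∈ D, φ r t * ‖esig r t‖ < 1) :
    ∀ i, 1 ≤ i → i ≤ r - 1 →
      (∀ t ∈ D, φ i t * ‖esig i t‖ ≤ max (φ i 0 * ‖esig i 0‖) ((M i + N i) / k i)) ∧
      max (φ i 0 * ‖esig i 0‖) ((M i + N i) / k i) < 1 :=
  stmt_8_general m r ω D hD k hk esig hesig φ φ' hΦ M N hM hN hK1 hK2 hfunnel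
end
end

section
/- Let ω ∈ (0,∞], m ∈ ℕ, φ ∈ Φ, and let e_r : [0,ω) → ℝ^m be continuously differentiable with φ(t)‖e_r(t)‖ < 1 for all t ∈ [0,ω) and φ(0)‖e_r(0)‖ < 1. Let γ, k_r, C > 0 and define k(t) := k_r / (1 − φ(t)² ‖e_r(t)‖²). If for all t ∈ [0,ω): (1/2) d/dt ‖e_r(t)‖² ≤ ( C − k(t) γ ‖e_r(t)‖ ) ‖e_r(t)‖, then there exists ε_r ∈ (0,1) such that φ(t)‖e_r(t)‖ ≤ ε_r for all t ∈ [0,ω); consequently the gain k is bounded on [0,ω). -/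
/-!
Set `ψ = φ² ‖e_r‖²`. On `[0, ω)` the error is bounded, on a compact initial piece by continuity and
afterwards because `φ` stays away from zero; hence the drift terms of `ψ'` are bounded by a constant
`2A`, while the gain term contributes `-2 k_r γ ψ / (1 - ψ)`, which blows up as `ψ → 1`. Choosing a
level `η < 1` above `ψ(0)` at which the gain term beats `2A`, the function `ψ` is strictly
decreasing whenever it touches `η`, so it can never cross it.
-/

open Set Filter

noncomputable section

open Topology

theorem image_le_const_of_deriv_neg_of_eq {f f' : ℝ → ℝ} {s : Set ℝ} {a η : ℝ}
    (hs : s.OrdConnected) (hf : ∀ x ∈ s, HasDerivWithinAt f (f' x) s x) (ha : a ∈ s)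
    (hfa : f a ≤ η) (hf' : ∀ x ∈ s, f x = η → f' x < 0) :
    ∀ x ∈ s, a ≤ x → f x ≤ η := by
  intro x hx hax
  have hsub : Icc a x ⊆ s := hs.out ha hx
  have hf_right : ∀ y ∈ Ico a x, HasDerivWithinAt f (f' y) (Ici y) y := fun y hy =>
    (hf y (hsub (Ico_subset_Icc_self hy))).mono_of_mem_nhdsWithin
      (mem_of_superset (Icc_mem_nhdsGE hy.2) (hs.out (hsub (Ico_subset_Icc_self hy)) hx))
  exact image_le_of_deriv_right_lt_deriv_boundary (B := fun _ => η) (B' := 0)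
    (fun y hy => (hf y (hsub hy)).continuousWithinAt.mono hsub) hf_right hfa
    (fun _ => hasDerivAt_const _ _) (fun y hy => hf' y (hsub (Ico_subset_Icc_self hy)))
    ⟨hax, le_rfl⟩

theorem exists_pos_le_of_liminf_pos {φ : ℝ → ℝ} {δ : ℝ} (hφ : ContinuousOn φ (Ici δ))
    (hpos : ∀ t ≥ δ, 0 < φ t) (hlim : 0 < liminf φ atTop) : ∃ c > 0, ∀ t ≥ δ, c ≤ φ t := by
  have hbdd : IsBoundedUnder (· ≥ ·) atTop φ :=
    isBoundedUnder_of_eventually_ge (eventually_atTop.2 ⟨δ, fun t ht => (hpos t ht).le⟩)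
  obtain ⟨T, hT⟩ := eventually_atTop.1 (eventually_lt_of_lt_liminf (half_lt_self hlim) hbdd)
  obtain ⟨t₀, ht₀, hmin⟩ := isCompact_Icc.exists_isMinOn (nonempty_Icc.2 (le_max_left δ T))
    (hφ.mono Icc_subset_Ici_self)
  refine ⟨min (φ t₀) (liminf φ atTop / 2), lt_min (hpos t₀ ht₀.1) (half_pos hlim), fun t ht => ?_⟩
  rcases le_total t (max δ T) with h | h
  · exact (min_le_left _ _).trans (hmin ⟨ht, h⟩)
  · exact (min_le_right _ _).trans (hT t ((le_max_right _ _).trans h)).le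

theorem exists_norm_le_of_mul_norm_le_one {E : Type*} [NormedAddCommGroup E] {s : Set ℝ}
    {a δ c : ℝ} {φ : ℝ → ℝ} {e : ℝ → E} (hs : s ⊆ Ici a) (hδ : Icc a δ ⊆ s)
    (he : ContinuousOn e s) (hc : 0 < c) (hφ : ∀ t ≥ δ, c ≤ φ t)
    (hφe : ∀ t ∈ s, φ t * ‖e t‖ ≤ 1) : ∃ B, ∀ t ∈ s, ‖e t‖ ≤ B := by
  obtain ⟨B, hB⟩ := isCompact_Icc.exists_bound_of_continuousOn (he.mono hδ)
  refine ⟨max B (1 / c), fun t ht => ?_⟩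
  rcases le_total t δ with h | h
  · exact le_max_of_le_left (hB t ⟨hs ht, h⟩)
  · refine le_max_of_le_right ((le_div_iff₀' hc).2 ?_)
    exact (mul_le_mul_of_nonneg_right (hφ t h) (norm_nonneg _)).trans (hφe t ht)

theorem exists_gt_mul_one_sub_lt {b : ℝ} (A : ℝ) {K : ℝ} (hb : b < 1) (hK : 0 < K) :
    ∃ η ∈ Ioo b 1, A * (1 - η) < K * η := by
  have hlim : Tendsto (fun η : ℝ => K * η - A * (1 - η)) (𝓝[<] 1) (𝓝 K) := by
    have : Continuous fun η : ℝ => K * η - A * (1 - η) := by fun_prop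
    simpa using (this.tendsto 1).mono_left nhdsWithin_le_nhds
  obtain ⟨η, hη, hAη⟩ :=
    (Filter.Eventually.and (Ioo_mem_nhdsLT hb) (hlim.eventually (lt_mem_nhds hK))).exists
  exact ⟨η, hη, by linarith⟩

namespace FunnelFun

variable {φ φ' : ℝ → ℝ}

theorem continuousOn (hΦ : FunnelFun φ φ') : ContinuousOn φ (Ici 0) :=
  fun t ht => (hΦ.1 t ht).continuousWithinAt

theorem nonneg_s13 (hΦ : FunnelFun φ φ') {t : ℝ} (ht : 0 ≤ t) : 0 ≤ φ t := by
  rcases ht.eq_or_lt with rfl | ht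
  · refine ge_of_tendsto ((hΦ.continuousOn 0 self_mem_Ici).tendsto.mono_left
      (nhdsWithin_mono _ Ioi_subset_Ici_self)) ?_
    exact eventually_nhdsWithin_of_forall fun x hx => (hΦ.2.2.2.2.1 x hx).le
  · exact (hΦ.2.2.2.2.1 t ht).le

theorem exists_pos_le (hΦ : FunnelFun φ φ') {δ : ℝ} (hδ : 0 < δ) :
    ∃ c > 0, ∀ t ≥ δ, c ≤ φ t :=
  exists_pos_le_of_liminf_pos (hΦ.continuousOn.mono (Ici_subset_Ici.2 hδ.le))
    (fun t ht => hΦ.2.2.2.2.1 t (hδ.trans_le ht)) hΦ.2.2.2.2.2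

end FunnelFun

theorem ordConnected_setOf_nonneg_coe_lt (ω : EReal) :
    {t : ℝ | 0 ≤ t ∧ (t : EReal) < ω}.OrdConnected :=
  ⟨fun _ hx _ hy _ hz => ⟨hx.1.trans hz.1, (EReal.coe_le_coe_iff.2 hz.2).trans_lt hy.2⟩⟩

theorem exists_pos_mem_setOf_nonneg_coe_lt {ω : EReal} (hω : 0 < ω) :
    ∃ δ > 0, δ ∈ {t : ℝ | 0 ≤ t ∧ (t : EReal) < ω} := by
  obtain ⟨δ, hδ', hδω⟩ := EReal.lt_iff_exists_real_btwn.1 hω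
  have hδ : (0 : ℝ) < δ := mod_cast hδ'
  exact ⟨δ, hδ, hδ.le, hδω⟩

/-- Here `a, p, n, N'` are the values of `φ, φ', ‖e_r‖, (‖e_r‖²)'` at a time where `ψ = η`. -/
theorem funnel_deriv_neg_of_eq {a p n N' B M M' C kr γ η : ℝ} (ha : 0 ≤ a) (haM : a ≤ M)
    (hp : |p| ≤ M') (hn : 0 ≤ n) (hnB : n ≤ B) (han : a * n ≤ 1) (hC : 0 ≤ C)
    (hη : a ^ 2 * n ^ 2 = η) (hη1 : η < 1)
    (hN : 1 / 2 * N' ≤ (C - kr / (1 - a ^ 2 * n ^ 2) * γ * n) * n)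
    (hgain : (M' * B + C * M) * (1 - η) < kr * γ * η) :
    2 * a * p * n ^ 2 + a ^ 2 * N' < 0 := by
  rw [hη] at hN
  have hdrift : a * p * n ^ 2 ≤ M' * B := calc
    a * p * n ^ 2 = p * ((a * n) * n) := by ring
    _ ≤ |p| * ((a * n) * n) := by gcongr; exact le_abs_self p
    _ ≤ M' * (1 * B) := by gcongr; exact (abs_nonneg p).trans hp
    _ = M' * B := by ring
  have hforce : a ^ 2 * C * n ≤ C * M := calc
    a ^ 2 * C * n = C * (a * (a * n)) := by ring
    _ ≤ C * (M * 1) := by gcongr; exact ha.trans haM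
    _ = C * M := by ring
  have hgain' : M' * B + C * M < kr / (1 - η) * γ * η := by
    rw [div_mul_eq_mul_div, div_mul_eq_mul_div, lt_div_iff₀ (by linarith)]
    linarith
  have hN' : a ^ 2 * N' ≤ 2 * (a ^ 2 * C * n - kr / (1 - η) * γ * (a ^ 2 * n ^ 2)) := by
    have := mul_le_mul_of_nonneg_left hN (sq_nonneg a)
    linarith
  rw [hη] at hN'
  linarith

theorem stmt_13_general (m : ℕ) (ω : EReal) (hω : 0 < ω)
    (D : Set ℝ) (hD : D = {t : ℝ | 0 ≤ t ∧ (t : EReal) < ω})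
    (φ φ' : ℝ → ℝ) (hΦ : FunnelFun φ φ')
    (er er' : ℝ → Euc m)
    (hder : ∀ t ∈ D, HasDerivWithinAt er (er' t) D t)
    (hfunnel : ∀ t ∈ D, φ t * ‖er t‖ < 1)
    (γ kr Cb : ℝ) (hγ : 0 < γ) (hkr : 0 < kr) (hCb : 0 < Cb)
    (hineq : ∀ t ∈ D,
      (1 / 2) * derivWithin (fun s => ‖er s‖ ^ 2) D t
        ≤ (Cb - (kr / (1 - (φ t) ^ 2 * ‖er t‖ ^ 2)) * γ * ‖er t‖) * ‖er t‖) :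
    (∃ ε : ℝ, ε ∈ Set.Ioo (0 : ℝ) 1 ∧ ∀ t ∈ D, φ t * ‖er t‖ ≤ ε) ∧
    (∃ K : ℝ, ∀ t ∈ D, kr / (1 - (φ t) ^ 2 * ‖er t‖ ^ 2) ≤ K) := by
  have hDc : D.OrdConnected := hD ▸ ordConnected_setOf_nonneg_coe_lt ω
  have h0D : (0 : ℝ) ∈ D := hD ▸ ⟨le_rfl, hω⟩
  have hDnn : D ⊆ Ici 0 := hD ▸ fun t ht => ht.1
  obtain ⟨δ, hδ, hδD⟩ := hD ▸ exists_pos_mem_setOf_nonneg_coe_lt hω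
  obtain ⟨c, hc, hφc⟩ := hΦ.exists_pos_le hδ
  obtain ⟨B, hB⟩ := exists_norm_le_of_mul_norm_le_one hDnn (hDc.out h0D hδD)
    (fun t ht => (hder t ht).continuousWithinAt) hc hφc (fun t ht => (hfunnel t ht).le)
  obtain ⟨M, hM⟩ := hΦ.2.2.1
  obtain ⟨M', hM'⟩ := hΦ.2.2.2.1
  have hψ0 : φ 0 ^ 2 * ‖er 0‖ ^ 2 < 1 := by
    rw [← mul_pow]
    exact pow_lt_one₀ (mul_nonneg (hΦ.nonneg_s13 le_rfl) (norm_nonneg _)) (hfunnel 0 h0D) two_ne_zero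
  obtain ⟨η, ⟨hψη, hη1⟩, hgain⟩ :=
    exists_gt_mul_one_sub_lt (M' * B + Cb * M) hψ0 (mul_pos hkr hγ)
  have hψ' : ∀ x ∈ D, HasDerivWithinAt (fun t => φ t ^ 2 * ‖er t‖ ^ 2)
      (2 * φ x * φ' x * ‖er x‖ ^ 2 + φ x ^ 2 * derivWithin (fun s => ‖er s‖ ^ 2) D x) D x := by
    intro x hx
    have hφx := ((hΦ.1 x (hDnn hx)).mono hDnn).pow 2
    have hnx := (hder x hx).norm_sq.differentiableWithinAt.hasDerivWithinAt
    exact (hφx.mul hnx).congr_deriv (by simp only [Pi.pow_apply]; push_cast; ring)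
  have hψ : ∀ t ∈ D, φ t ^ 2 * ‖er t‖ ^ 2 ≤ η := fun t ht =>
    image_le_const_of_deriv_neg_of_eq hDc hψ' h0D hψη.le
      (fun x hx hxη => funnel_deriv_neg_of_eq (hΦ.nonneg_s13 (hDnn hx))
        ((le_abs_self _).trans (hM x (hDnn hx))) (hM' x (hDnn hx)) (norm_nonneg _) (hB x hx)
        (hfunnel x hx).le hCb.le hxη hη1 (hineq x hx) hgain) t ht (hDnn ht)
  have hη : 0 < η := (by positivity : (0 : ℝ) ≤ _).trans_lt hψη
  refine ⟨⟨√η, ⟨Real.sqrt_pos.2 hη, (Real.sqrt_lt' one_pos).2 (by linarith)⟩, fun t ht => ?_⟩,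
    ⟨kr / (1 - η), fun t ht => ?_⟩⟩
  · exact (le_abs_self _).trans (Real.abs_le_sqrt (by rw [mul_pow]; exact hψ t ht))
  · exact div_le_div_of_nonneg_left hkr.le (by linarith) (by linarith [hψ t ht])

/-- **Gain boundedness: the error stays uniformly away from the funnel boundary.**
If `φ(t)‖e_r(t)‖ < 1` on `[0,ω)` and `(1/2) d/dt ‖e_r‖² ≤ (C − k(t) γ ‖e_r‖)‖e_r‖` with
`k(t) = k_r/(1 − φ(t)²‖e_r(t)‖²)`, then `φ‖e_r‖ ≤ ε_r` for some `ε_r ∈ (0,1)` and the gain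
`k` is bounded on `[0,ω)`. -/
theorem stmt_13 (m : ℕ) (ω : EReal) (hω : 0 < ω)
    (D : Set ℝ) (hD : D = {t : ℝ | 0 ≤ t ∧ (t : EReal) < ω})
    (φ φ' : ℝ → ℝ) (hΦ : FunnelFun φ φ')
    (er er' : ℝ → Euc m)
    (hder : ∀ t ∈ D, HasDerivWithinAt er (er' t) D t)
    (hcont : ContinuousOn er' D)
    (hfunnel : ∀ t ∈ D, φ t * ‖er t‖ < 1)
    (h0 : φ 0 * ‖er 0‖ < 1)
    (γ kr Cb : ℝ) (hγ : 0 < γ) (hkr : 0 < kr) (hCb : 0 < Cb)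
    (hineq : ∀ t ∈ D,
      (1 / 2) * derivWithin (fun s => ‖er s‖ ^ 2) D t
        ≤ (Cb - (kr / (1 - (φ t) ^ 2 * ‖er t‖ ^ 2)) * γ * ‖er t‖) * ‖er t‖) :
    (∃ ε : ℝ, ε ∈ Set.Ioo (0 : ℝ) 1 ∧ ∀ t ∈ D, φ t * ‖er t‖ ≤ ε) ∧
    (∃ K : ℝ, ∀ t ∈ D, kr / (1 - (φ t) ^ 2 * ‖er t‖ ^ 2) ≤ K) :=
  stmt_13_general m ω hω D hD φ φ' hΦ er er' hder hfunnel γ kr Cb hγ hkr hCb hineq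
end
end
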